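/- arXiv:1512.01357 — 2 statements merged into one kernel-verified Lean document; each statement's English description precedes it below -/
import Mathlib

section
/- Let H be a dual quasi-Hopf algebra with bijective antipode s, and define U ∈ (H⊗H)* by U(a,b) = g(a₁,b₁)q^R(s(b₂),s(a₂)) where g is the inverse Drinfeld twist and q^R(a,b) = σ(a,b₃,s⁻¹(b₁))α(s⁻¹(b₂)). Then U(a,b₁)s(b₂) = s(a₁b₁)U(a₂,b₂)a₃ for all a,b ∈ H. -/
/-!
Both sides are brought to the normal form `g(a₁,b₁) q^R(s(b₃),s(a₃)) (s(b₂)s(a₂))a₄`.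
For the left side this is the identity
`q^R(s(y₁),s(x)) s(y₂) = q^R(s(y₂),s(x₂)) (s(y₁)s(x₁))x₃`, which follows from
`q^R(z,s(c)) = σ(z,s(c₁),c₃)α(c₂)`, quasi-associativity and `s(c₁)α(c₂)c₃ = α(c)1`.
For the right side it is `s(x₁y₁) g(x₂,y₂) = g(x₁,y₁) s(y₂)s(x₂)`: expand `s(y₂)s(x₂)` by the
twist equation and contract `g(x₁,y₁)f(x₂,y₂) = ε(x)ε(y)`.
-/

open TensorProduct

noncomputable section

namespace DQH

/-- Iterated comultiplication, 3 legs, right-nested. -/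
def cD3 {k H : Type} [Field k] [AddCommGroup H] [Module k H]
    (Δ : H →ₗ[k] H ⊗[k] H) (a : H) : H ⊗[k] (H ⊗[k] H) :=
  (TensorProduct.map LinearMap.id Δ) (Δ a)

/-- Iterated comultiplication, 4 legs, right-nested. -/
def cD4 {k H : Type} [Field k] [AddCommGroup H] [Module k H]
    (Δ : H →ₗ[k] H ⊗[k] H) (a : H) : H ⊗[k] (H ⊗[k] (H ⊗[k] H)) :=
  (TensorProduct.map LinearMap.id (TensorProduct.map LinearMap.id Δ)) (cD3 Δ a)

/-- Iterated comultiplication, 5 legs, right-nested. -/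
def cD5 {k H : Type} [Field k] [AddCommGroup H] [Module k H]
    (Δ : H →ₗ[k] H ⊗[k] H) (a : H) : H ⊗[k] (H ⊗[k] (H ⊗[k] (H ⊗[k] H))) :=
  (TensorProduct.map LinearMap.id (TensorProduct.map LinearMap.id
    (TensorProduct.map LinearMap.id Δ))) (cD4 Δ a)

/-- Iterated comultiplication, 6 legs, right-nested. -/
def cD6 {k H : Type} [Field k] [AddCommGroup H] [Module k H]
    (Δ : H →ₗ[k] H ⊗[k] H) (a : H) : H ⊗[k] (H ⊗[k] (H ⊗[k] (H ⊗[k] (H ⊗[k] H)))) :=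
  (TensorProduct.map LinearMap.id (TensorProduct.map LinearMap.id
    (TensorProduct.map LinearMap.id (TensorProduct.map LinearMap.id Δ)))) (cD5 Δ a)

/-- A dual quasi-bialgebra over a field `k`: a coassociative coalgebra `(H, comul, counit)`
together with coalgebra morphisms `mul` (multiplication) and a unit `one`, and a
convolution-invertible reassociator `sigma ∈ (H⊗H⊗H)^*` (with inverse `sigmaInv`),
satisfying the dual quasi-bialgebra axioms.  Sweedler sums are expressed by quantifying over
finite presentations of the (iterated) comultiplications as sums of pure tensors. -/
structure DualQuasiBialgebra (k H : Type) [Field k] [AddCommGroup H] [Module k H] where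
  comul : H →ₗ[k] H ⊗[k] H
  counit : H →ₗ[k] k
  coassoc : ∀ a : H,
    (TensorProduct.assoc k H H H) ((TensorProduct.map comul LinearMap.id) (comul a)) =
      (TensorProduct.map LinearMap.id comul) (comul a)
  counit_left : ∀ a : H,
    (TensorProduct.lid k H) ((TensorProduct.map counit LinearMap.id) (comul a)) = a
  counit_right : ∀ a : H,
    (TensorProduct.rid k H) ((TensorProduct.map LinearMap.id counit) (comul a)) = a
  mul : H →ₗ[k] H →ₗ[k] H
  one : H
  one_mul : ∀ a : H, mul one a = a
  mul_one : ∀ a : H, mul a one = a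
  counit_one : counit one = 1
  comul_one : comul one = one ⊗ₜ[k] one
  counit_mul : ∀ a b : H, counit (mul a b) = counit a * counit b
  comul_mul : ∀ (a b : H) (sa sb : Finset ℕ) (a1 a2 b1 b2 : ℕ → H),
    comul a = ∑ i ∈ sa, a1 i ⊗ₜ[k] a2 i →
    comul b = ∑ j ∈ sb, b1 j ⊗ₜ[k] b2 j →
    comul (mul a b) = ∑ i ∈ sa, ∑ j ∈ sb, mul (a1 i) (b1 j) ⊗ₜ[k] mul (a2 i) (b2 j)
  sigma : H →ₗ[k] H →ₗ[k] H →ₗ[k] k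
  sigmaInv : H →ₗ[k] H →ₗ[k] H →ₗ[k] k
  sigma_sigmaInv : ∀ (a b c : H) (sa sb sc : Finset ℕ) (a1 a2 b1 b2 c1 c2 : ℕ → H),
    comul a = ∑ i ∈ sa, a1 i ⊗ₜ[k] a2 i →
    comul b = ∑ j ∈ sb, b1 j ⊗ₜ[k] b2 j →
    comul c = ∑ l ∈ sc, c1 l ⊗ₜ[k] c2 l →
    ∑ i ∈ sa, ∑ j ∈ sb, ∑ l ∈ sc,
        sigma (a1 i) (b1 j) (c1 l) * sigmaInv (a2 i) (b2 j) (c2 l) =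
      counit a * counit b * counit c
  sigmaInv_sigma : ∀ (a b c : H) (sa sb sc : Finset ℕ) (a1 a2 b1 b2 c1 c2 : ℕ → H),
    comul a = ∑ i ∈ sa, a1 i ⊗ₜ[k] a2 i →
    comul b = ∑ j ∈ sb, b1 j ⊗ₜ[k] b2 j →
    comul c = ∑ l ∈ sc, c1 l ⊗ₜ[k] c2 l →
    ∑ i ∈ sa, ∑ j ∈ sb, ∑ l ∈ sc,
        sigmaInv (a1 i) (b1 j) (c1 l) * sigma (a2 i) (b2 j) (c2 l) =
      counit a * counit b * counit c
  -- (1a) : a₁(b₁c₁)σ(a₂,b₂,c₂) = σ(a₁,b₁,c₁)(a₂b₂)c₂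
  quasi_assoc : ∀ (a b c : H) (sa sb sc : Finset ℕ) (a1 a2 b1 b2 c1 c2 : ℕ → H),
    comul a = ∑ i ∈ sa, a1 i ⊗ₜ[k] a2 i →
    comul b = ∑ j ∈ sb, b1 j ⊗ₜ[k] b2 j →
    comul c = ∑ l ∈ sc, c1 l ⊗ₜ[k] c2 l →
    ∑ i ∈ sa, ∑ j ∈ sb, ∑ l ∈ sc,
        sigma (a2 i) (b2 j) (c2 l) • mul (a1 i) (mul (b1 j) (c1 l)) =
      ∑ i ∈ sa, ∑ j ∈ sb, ∑ l ∈ sc,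
        sigma (a1 i) (b1 j) (c1 l) • mul (mul (a2 i) (b2 j)) (c2 l)
  -- (1c) : σ(a₁,b₁,c₁d₁)σ(a₂b₂,c₂,d₂) = σ(b₁,c₁,d₁)σ(a₁,b₂c₂,d₂)σ(a₂,b₃,c₃)
  pentagon : ∀ (a b c d : H) (sa sb sc sd sb3 sc3 : Finset ℕ)
      (a1 a2 b1 b2 c1 c2 d1 d2 b1' b2' b3' c1' c2' c3' : ℕ → H),
    comul a = ∑ i ∈ sa, a1 i ⊗ₜ[k] a2 i →
    comul b = ∑ j ∈ sb, b1 j ⊗ₜ[k] b2 j →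
    comul c = ∑ l ∈ sc, c1 l ⊗ₜ[k] c2 l →
    comul d = ∑ r ∈ sd, d1 r ⊗ₜ[k] d2 r →
    cD3 comul b = ∑ j ∈ sb3, b1' j ⊗ₜ[k] (b2' j ⊗ₜ[k] b3' j) →
    cD3 comul c = ∑ l ∈ sc3, c1' l ⊗ₜ[k] (c2' l ⊗ₜ[k] c3' l) →
    ∑ i ∈ sa, ∑ j ∈ sb, ∑ l ∈ sc, ∑ r ∈ sd,
        sigma (a1 i) (b1 j) (mul (c1 l) (d1 r)) * sigma (mul (a2 i) (b2 j)) (c2 l) (d2 r) =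
      ∑ i ∈ sa, ∑ j ∈ sb3, ∑ l ∈ sc3, ∑ r ∈ sd,
        sigma (b1' j) (c1' l) (d1 r) * sigma (a1 i) (mul (b2' j) (c2' l)) (d2 r) *
          sigma (a2 i) (b3' j) (c3' l)
  -- (1d) : σ(a,1,b) = ε(a)ε(b)
  sigma_one_mid : ∀ a b : H, sigma a one b = counit a * counit b

/-- A dual quasi-Hopf algebra: a dual quasi-bialgebra together with a coalgebra
anti-morphism `antipode` and functionals `alpha, beta ∈ H^*` satisfying the antipode axioms. -/
structure DualQuasiHopfAlgebra (k H : Type) [Field k] [AddCommGroup H] [Module k H]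
    extends DualQuasiBialgebra k H where
  antipode : H →ₗ[k] H
  comul_antipode : ∀ (a : H) (sa : Finset ℕ) (a1 a2 : ℕ → H),
    comul a = ∑ i ∈ sa, a1 i ⊗ₜ[k] a2 i →
    comul (antipode a) = ∑ i ∈ sa, antipode (a2 i) ⊗ₜ[k] antipode (a1 i)
  counit_antipode : ∀ a : H, counit (antipode a) = counit a
  alpha : H →ₗ[k] k
  beta : H →ₗ[k] k
  -- (1e) : s(h₁)α(h₂)h₃ = α(h)1
  antipode_alpha : ∀ (a : H) (sa : Finset ℕ) (a1 a2 a3 : ℕ → H),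
    cD3 comul a = ∑ i ∈ sa, a1 i ⊗ₜ[k] (a2 i ⊗ₜ[k] a3 i) →
    ∑ i ∈ sa, alpha (a2 i) • mul (antipode (a1 i)) (a3 i) = alpha a • one
  -- (1e) : h₁β(h₂)s(h₃) = β(h)1
  antipode_beta : ∀ (a : H) (sa : Finset ℕ) (a1 a2 a3 : ℕ → H),
    cD3 comul a = ∑ i ∈ sa, a1 i ⊗ₜ[k] (a2 i ⊗ₜ[k] a3 i) →
    ∑ i ∈ sa, beta (a2 i) • mul (a1 i) (antipode (a3 i)) = beta a • one
  -- (1f) : σ(h₁β(h₂), s(h₃), α(h₄)h₅) = ε(h)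
  sigma_antipode : ∀ (a : H) (sa : Finset ℕ) (a1 a2 a3 a4 a5 : ℕ → H),
    cD5 comul a = ∑ i ∈ sa, a1 i ⊗ₜ[k] (a2 i ⊗ₜ[k] (a3 i ⊗ₜ[k] (a4 i ⊗ₜ[k] a5 i))) →
    ∑ i ∈ sa, beta (a2 i) * alpha (a4 i) * sigma (a1 i) (antipode (a3 i)) (a5 i) = counit a
  -- (1f) : σ⁻¹(s(h₁), α(h₂)h₃, β(h₄)s(h₅)) = ε(h)
  sigmaInv_antipode : ∀ (a : H) (sa : Finset ℕ) (a1 a2 a3 a4 a5 : ℕ → H),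
    cD5 comul a = ∑ i ∈ sa, a1 i ⊗ₜ[k] (a2 i ⊗ₜ[k] (a3 i ⊗ₜ[k] (a4 i ⊗ₜ[k] a5 i))) →
    ∑ i ∈ sa, alpha (a2 i) * beta (a4 i) *
      sigmaInv (antipode (a1 i)) (a3 i) (antipode (a5 i)) = counit a

variable {k H : Type} [Field k] [AddCommGroup H] [Module k H]

/-- `(M, coact)` is a left `H`-comodule. -/
def IsComodule (B : DualQuasiBialgebra k H) {M : Type} [AddCommGroup M] [Module k M]
    (coact : M →ₗ[k] H ⊗[k] M) : Prop :=
  (∀ m : M, (TensorProduct.assoc k H H M)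
      ((TensorProduct.map B.comul LinearMap.id) (coact m)) =
      (TensorProduct.map LinearMap.id coact) (coact m)) ∧
  (∀ m : M, (TensorProduct.lid k M)
      ((TensorProduct.map B.counit LinearMap.id) (coact m)) = m)

/-- `cweight coact φ m = φ(m₍₋₁₎) • m₍₀₎`. -/
def cweight {M : Type} [AddCommGroup M] [Module k M]
    (coact : M →ₗ[k] H ⊗[k] M) (φ : H →ₗ[k] k) : M →ₗ[k] M :=
  (TensorProduct.lid k M).toLinearMap ∘ₗ (TensorProduct.map φ LinearMap.id) ∘ₗ coact

/-- Diagonal coaction on the tensor product of two left comodules: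
`(m ⊗ n) ↦ m₍₋₁₎n₍₋₁₎ ⊗ (m₍₀₎ ⊗ n₍₀₎)`. -/
def coactTensor (B : DualQuasiBialgebra k H) {M N : Type}
    [AddCommGroup M] [Module k M] [AddCommGroup N] [Module k N]
    (cM : M →ₗ[k] H ⊗[k] M) (cN : N →ₗ[k] H ⊗[k] N) :
    (M ⊗[k] N) →ₗ[k] H ⊗[k] (M ⊗[k] N) :=
  (TensorProduct.map (TensorProduct.lift B.mul) LinearMap.id) ∘ₗ
    (TensorProduct.tensorTensorTensorComm k H M H N).toLinearMap ∘ₗ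
      (TensorProduct.map cM cN)

/-- `sigma` as a linear functional on `(H ⊗ H) ⊗ H`. -/
def sigma3 (B : DualQuasiBialgebra k H) : (H ⊗[k] H) ⊗[k] H →ₗ[k] k :=
  TensorProduct.lift (TensorProduct.lift B.sigma)

/-- `sigmaInv` as a linear functional on `(H ⊗ H) ⊗ H`. -/
def sigmaInv3 (B : DualQuasiBialgebra k H) : (H ⊗[k] H) ⊗[k] H →ₗ[k] k :=
  TensorProduct.lift (TensorProduct.lift B.sigmaInv)

/-- `sigma` as a linear functional on `H ⊗ (H ⊗ H)`. -/
def sigma3R (B : DualQuasiBialgebra k H) : H ⊗[k] (H ⊗[k] H) →ₗ[k] k :=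
  sigma3 B ∘ₗ (TensorProduct.assoc k H H H).symm.toLinearMap

/-- The associativity constraint of the monoidal category of left `H`-comodules:
`a((m⊗n)⊗p) = σ⁻¹(m₍₋₁₎,n₍₋₁₎,p₍₋₁₎) m₍₀₎ ⊗ (n₍₀₎ ⊗ p₍₀₎)`. -/
def assocMap (B : DualQuasiBialgebra k H) {M N P : Type}
    [AddCommGroup M] [Module k M] [AddCommGroup N] [Module k N] [AddCommGroup P] [Module k P]
    (cM : M →ₗ[k] H ⊗[k] M) (cN : N →ₗ[k] H ⊗[k] N) (cP : P →ₗ[k] H ⊗[k] P) :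
    (M ⊗[k] N) ⊗[k] P →ₗ[k] M ⊗[k] (N ⊗[k] P) :=
  (TensorProduct.lid k (M ⊗[k] (N ⊗[k] P))).toLinearMap ∘ₗ
    (TensorProduct.map (sigmaInv3 B) (TensorProduct.assoc k M N P).toLinearMap) ∘ₗ
      (TensorProduct.tensorTensorTensorComm k (H ⊗[k] H) (M ⊗[k] N) H P).toLinearMap ∘ₗ
        (TensorProduct.map (TensorProduct.tensorTensorTensorComm k H M H N).toLinearMap
          LinearMap.id) ∘ₗ
          (TensorProduct.map (TensorProduct.map cM cN) cP)

/-- The inverse associativity constraint of the monoidal category of left `H`-comodules: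
`a⁻¹(m⊗(n⊗p)) = σ(m₍₋₁₎,n₍₋₁₎,p₍₋₁₎) (m₍₀₎ ⊗ n₍₀₎) ⊗ p₍₀₎`. -/
def assocInvMap (B : DualQuasiBialgebra k H) {M N P : Type}
    [AddCommGroup M] [Module k M] [AddCommGroup N] [Module k N] [AddCommGroup P] [Module k P]
    (cM : M →ₗ[k] H ⊗[k] M) (cN : N →ₗ[k] H ⊗[k] N) (cP : P →ₗ[k] H ⊗[k] P) :
    M ⊗[k] (N ⊗[k] P) →ₗ[k] (M ⊗[k] N) ⊗[k] P :=
  (TensorProduct.lid k ((M ⊗[k] N) ⊗[k] P)).toLinearMap ∘ₗ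
    (TensorProduct.map (sigma3R B) (TensorProduct.assoc k M N P).symm.toLinearMap) ∘ₗ
      (TensorProduct.tensorTensorTensorComm k H M (H ⊗[k] H) (N ⊗[k] P)).toLinearMap ∘ₗ
        (TensorProduct.map LinearMap.id
          (TensorProduct.tensorTensorTensorComm k H N H P).toLinearMap) ∘ₗ
          (TensorProduct.map cM (TensorProduct.map cN cP))

/-- The pre-braiding of the category of left-left Yetter-Drinfeld modules:
`c_{N,M}(n ⊗ m) = n₍₋₁₎ · m ⊗ n₍₀₎`. -/
def ydBraiding {M N : Type}
    [AddCommGroup M] [Module k M] [AddCommGroup N] [Module k N]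
    (actM : H →ₗ[k] M →ₗ[k] M) (cN : N →ₗ[k] H ⊗[k] N) :
    N ⊗[k] M →ₗ[k] M ⊗[k] N :=
  (TensorProduct.map (TensorProduct.lift actM) LinearMap.id) ∘ₗ
    (TensorProduct.assoc k H M N).symm.toLinearMap ∘ₗ
      (TensorProduct.map LinearMap.id (TensorProduct.comm k N M).toLinearMap) ∘ₗ
        (TensorProduct.assoc k H N M).toLinearMap ∘ₗ
          (TensorProduct.map cN LinearMap.id)

/-- `(M, coact, act)` is a left-left Yetter-Drinfeld module over the dual quasi-bialgebra `B`:
`M` is a left `H`-comodule, `act` is a (not necessarily associative) left `H`-action with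
`1 · m = m`, satisfying the quasi-associativity axiom (YD1)
`σ(h₁,g₁,m₍₋₁₎)σ((h₂g₂·m₍₀₎)₍₋₁₎,h₃,g₃)(h₂g₂·m₍₀₎)₍₀₎ = σ(h₁,(g₁·m)₍₋₁₎,g₂) h₂·(g₁·m)₍₀₎`
and the compatibility axiom (YD3)
`h₁m₍₋₁₎ ⊗ h₂·m₍₀₎ = (h₁·m)₍₋₁₎h₂ ⊗ (h₁·m)₍₀₎`. -/
structure IsYetterDrinfeld (B : DualQuasiBialgebra k H) {M : Type}
    [AddCommGroup M] [Module k M]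
    (coact : M →ₗ[k] H ⊗[k] M) (act : H →ₗ[k] M →ₗ[k] M) : Prop where
  comodule : IsComodule B coact
  one_act : ∀ m : M, act B.one m = m
  yd1 : ∀ (h g : H) (m : M) (sh3 sg3 sh sg sm : Finset ℕ)
      (h1 h2 h3 g1 g2 g3 h1' h2' g1' g2' m1 : ℕ → H) (m0 : ℕ → M),
    cD3 B.comul h = ∑ i ∈ sh3, h1 i ⊗ₜ[k] (h2 i ⊗ₜ[k] h3 i) →
    cD3 B.comul g = ∑ j ∈ sg3, g1 j ⊗ₜ[k] (g2 j ⊗ₜ[k] g3 j) →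
    B.comul h = ∑ i ∈ sh, h1' i ⊗ₜ[k] h2' i →
    B.comul g = ∑ j ∈ sg, g1' j ⊗ₜ[k] g2' j →
    coact m = ∑ r ∈ sm, m1 r ⊗ₜ[k] m0 r →
    ∑ i ∈ sh3, ∑ j ∈ sg3, ∑ r ∈ sm,
        B.sigma (h1 i) (g1 j) (m1 r) •
          cweight coact ((B.sigma.flip (h3 i)).flip (g3 j))
            (act (B.mul (h2 i) (g2 j)) (m0 r)) =
      ∑ i ∈ sh, ∑ j ∈ sg,
        act (h2' i) (cweight coact ((B.sigma (h1' i)).flip (g2' j)) (act (g1' j) m))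
  yd3 : ∀ (h : H) (m : M) (sh sm : Finset ℕ) (h1 h2 m1 : ℕ → H) (m0 : ℕ → M),
    B.comul h = ∑ i ∈ sh, h1 i ⊗ₜ[k] h2 i →
    coact m = ∑ j ∈ sm, m1 j ⊗ₜ[k] m0 j →
    ∑ i ∈ sh, ∑ j ∈ sm, B.mul (h1 i) (m1 j) ⊗ₜ[k] act (h2 i) (m0 j) =
      ∑ i ∈ sh, (TensorProduct.map (B.mul.flip (h2 i)) LinearMap.id)
        (coact (act (h1 i) m))

end DQH

theorem TensorProduct.exists_sum_nat_tmul {R M N : Type*} [CommSemiring R] [AddCommMonoid M]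
    [AddCommMonoid N] [Module R M] [Module R N] (t : M ⊗[R] N) :
    ∃ (s : Finset ℕ) (x : ℕ → M) (y : ℕ → N), t = ∑ i ∈ s, x i ⊗ₜ[R] y i := by
  obtain ⟨S, rfl⟩ := TensorProduct.exists_multiset t
  obtain ⟨L, rfl⟩ := Quot.exists_rep S
  refine ⟨Finset.range L.length, fun i => (L.getD i 0).1, fun i => (L.getD i 0).2, ?_⟩
  rw [Finset.sum_range]
  simp only [List.getD_eq_getElem, Fin.is_lt,
    Fin.sum_univ_fun_getElem (f := fun p : M × N => p.1 ⊗ₜ[R] p.2)]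
  rfl

namespace DQH

/- Sweedler sums are finite presentations of iterated coproducts. Two bracketings of the same
iterated coproduct are compared by applying one linear map, assembled from the contractions
below, to both expansions. -/
section Contractions

variable {R A X M N : Type*} [CommSemiring R] [AddCommMonoid A] [Module R A]
  [AddCommMonoid X] [Module R X] [AddCommMonoid M] [Module R M] [AddCommMonoid N] [Module R N]

def contractFst (φ : A →ₗ[R] R) (F : X →ₗ[R] M) : A ⊗[R] X →ₗ[R] M :=
  (TensorProduct.lid R M).toLinearMap ∘ₗ TensorProduct.map φ F

@[simp] theorem contractFst_tmul (φ : A →ₗ[R] R) (F : X →ₗ[R] M) (a : A) (x : X) :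
    contractFst φ F (a ⊗ₜ x) = φ a • F x := rfl

def contractLast (F : X →ₗ[R] M) (φ : A →ₗ[R] R) : X ⊗[R] A →ₗ[R] M :=
  (TensorProduct.rid R M).toLinearMap ∘ₗ TensorProduct.map F φ

@[simp] theorem contractLast_tmul (F : X →ₗ[R] M) (φ : A →ₗ[R] R) (x : X) (a : A) :
    contractLast F φ (x ⊗ₜ a) = φ a • F x := by
  simp [contractLast]

def applyFst (G : A →ₗ[R] M →ₗ[R] N) (F : X →ₗ[R] M) : A ⊗[R] X →ₗ[R] N :=
  TensorProduct.lift (G.compl₂ F)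

@[simp] theorem applyFst_tmul (G : A →ₗ[R] M →ₗ[R] N) (F : X →ₗ[R] M) (a : A) (x : X) :
    applyFst G F (a ⊗ₜ x) = G a (F x) := rfl

def contractFstₗ (φ : A →ₗ[R] R) : (X →ₗ[R] M) →ₗ[R] (A ⊗[R] X →ₗ[R] M) where
  toFun := contractFst φ
  map_add' F F' := TensorProduct.ext' fun a x => by simp
  map_smul' c F := TensorProduct.ext' fun a x => by simp [smul_comm (φ a) c]

@[simp] theorem contractFstₗ_apply (φ : A →ₗ[R] R) (F : X →ₗ[R] M) :
    contractFstₗ φ F = contractFst φ F := rfl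

def contractFstFlipₗ (F : X →ₗ[R] M) : (A →ₗ[R] R) →ₗ[R] (A ⊗[R] X →ₗ[R] M) where
  toFun φ := contractFst φ F
  map_add' φ ψ := TensorProduct.ext' fun a x => by simp [add_smul]
  map_smul' c φ := TensorProduct.ext' fun a x => by simp [mul_smul]

@[simp] theorem contractFstFlipₗ_apply (F : X →ₗ[R] M) (φ : A →ₗ[R] R) :
    contractFstFlipₗ F φ = contractFst φ F := rfl

def contractLastₗ (F : X →ₗ[R] M) : (A →ₗ[R] R) →ₗ[R] (X ⊗[R] A →ₗ[R] M) where
  toFun := contractLast F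
  map_add' φ ψ := TensorProduct.ext' fun x a => by simp [add_smul]
  map_smul' c φ := TensorProduct.ext' fun x a => by simp [mul_smul]

@[simp] theorem contractLastₗ_apply (F : X →ₗ[R] M) (φ : A →ₗ[R] R) :
    contractLastₗ F φ = contractLast F φ := rfl

def applyFstₗ (G : A →ₗ[R] M →ₗ[R] N) : (X →ₗ[R] M) →ₗ[R] (A ⊗[R] X →ₗ[R] N) where
  toFun := applyFst G
  map_add' F F' := TensorProduct.ext' fun a x => by simp
  map_smul' c F := TensorProduct.ext' fun a x => by simp

@[simp] theorem applyFstₗ_apply (G : A →ₗ[R] M →ₗ[R] N) (F : X →ₗ[R] M) :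
    applyFstₗ G F = applyFst G F := rfl

end Contractions

/-- The axioms are stated for `ℕ`-indexed presentations; `pairIndex` flattens a double sum into
one through `Nat.pair`. -/
def pairIndex (s : Finset ℕ) (t : ℕ → Finset ℕ) : Finset ℕ :=
  (s.sigma t).image fun p => Nat.pair p.1 p.2

theorem sum_pairIndex {M : Type*} [AddCommMonoid M] (s : Finset ℕ) (t : ℕ → Finset ℕ)
    (F : ℕ → ℕ → M) :
    ∑ n ∈ pairIndex s t, F n.unpair.1 n.unpair.2 = ∑ i ∈ s, ∑ j ∈ t i, F i j := by
  rw [pairIndex, Finset.sum_image, Finset.sum_sigma]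
  · simp
  · rintro ⟨i, j⟩ - ⟨i', j'⟩ - h
    obtain ⟨rfl, rfl⟩ := Nat.pair_eq_pair.mp h
    rfl

section Coalgebra

variable {k H : Type} [Field k] [AddCommGroup H] [Module k H] {B : DualQuasiBialgebra k H}

local notation "Δ" => B.comul
local notation "ε" => B.counit

theorem sum_counit_smul {x : H} {s : Finset ℕ} {x1 x2 : ℕ → H}
    (h : Δ x = ∑ i ∈ s, x1 i ⊗ₜ[k] x2 i) :
    ∑ i ∈ s, ε (x1 i) • x2 i = x := by
  simpa [h, map_sum] using B.counit_left x

theorem sum_counit_smul_map_comul {M : Type} [AddCommGroup M] [Module k M]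
    (E : H ⊗[k] H →ₗ[k] M) {x : H} {s : Finset ℕ} {x1 x2 : ℕ → H}
    (h : Δ x = ∑ i ∈ s, x1 i ⊗ₜ[k] x2 i) :
    ∑ i ∈ s, ε (x1 i) • E (Δ (x2 i)) = ∑ i ∈ s, E (x1 i ⊗ₜ[k] x2 i) := by
  rw [← map_sum, ← h, ← sum_counit_smul h]
  simp only [map_sum, map_smul]

theorem cD3_eq_sum_right {x : H} {s : Finset ℕ} {x1 x2 : ℕ → H} {t : ℕ → Finset ℕ}
    {y1 y2 : ℕ → ℕ → H} (h : Δ x = ∑ i ∈ s, x1 i ⊗ₜ[k] x2 i)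
    (h2 : ∀ i ∈ s, Δ (x2 i) = ∑ j ∈ t i, y1 i j ⊗ₜ[k] y2 i j) :
    cD3 Δ x = ∑ i ∈ s, ∑ j ∈ t i, x1 i ⊗ₜ[k] (y1 i j ⊗ₜ[k] y2 i j) := by
  rw [cD3, h, map_sum]
  refine Finset.sum_congr rfl fun i hi => ?_
  simp [h2 i hi, tmul_sum]

theorem cD3_eq_sum_left {x : H} {s : Finset ℕ} {x1 x2 : ℕ → H} {t : ℕ → Finset ℕ}
    {u v : ℕ → ℕ → H} (h : Δ x = ∑ i ∈ s, x1 i ⊗ₜ[k] x2 i)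
    (h1 : ∀ i ∈ s, Δ (x1 i) = ∑ j ∈ t i, u i j ⊗ₜ[k] v i j) :
    cD3 Δ x = ∑ i ∈ s, ∑ j ∈ t i, u i j ⊗ₜ[k] (v i j ⊗ₜ[k] x2 i) := by
  rw [cD3, ← B.coassoc x, h, map_sum, map_sum]
  refine Finset.sum_congr rfl fun i hi => ?_
  simp [h1 i hi, sum_tmul]

theorem cD4_eq_sum_tmul_cD3 {x : H} {s : Finset ℕ} {x1 x2 : ℕ → H}
    (h : Δ x = ∑ i ∈ s, x1 i ⊗ₜ[k] x2 i) :
    cD4 Δ x = ∑ i ∈ s, x1 i ⊗ₜ[k] cD3 Δ (x2 i) := by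
  simp [cD4, cD3, h, map_sum]

theorem cD5_eq_sum_tmul_cD4 {x : H} {s : Finset ℕ} {x1 x2 : ℕ → H}
    (h : Δ x = ∑ i ∈ s, x1 i ⊗ₜ[k] x2 i) :
    cD5 Δ x = ∑ i ∈ s, x1 i ⊗ₜ[k] cD4 Δ (x2 i) := by
  rw [cD5, cD4_eq_sum_tmul_cD3 h, map_sum]
  simp [cD4]

theorem cD4_eq_sum_right {x : H} {s : Finset ℕ} {x1 x2 : ℕ → H} {t : ℕ → Finset ℕ}
    {c1 c : ℕ → ℕ → H} {u : ℕ → ℕ → Finset ℕ} {c2 c3 : ℕ → ℕ → ℕ → H}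
    (h : Δ x = ∑ i ∈ s, x1 i ⊗ₜ[k] x2 i)
    (h2 : ∀ i ∈ s, Δ (x2 i) = ∑ j ∈ t i, c1 i j ⊗ₜ[k] c i j)
    (h3 : ∀ i ∈ s, ∀ j ∈ t i, Δ (c i j) = ∑ l ∈ u i j, c2 i j l ⊗ₜ[k] c3 i j l) :
    cD4 Δ x = ∑ i ∈ s, ∑ j ∈ t i, ∑ l ∈ u i j,
      x1 i ⊗ₜ[k] (c1 i j ⊗ₜ[k] (c2 i j l ⊗ₜ[k] c3 i j l)) := by
  rw [cD4_eq_sum_tmul_cD3 h]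
  refine Finset.sum_congr rfl fun i hi => ?_
  simp [cD3_eq_sum_right (h2 i hi) (h3 i hi), tmul_sum]

theorem cD4_eq_sum_pairs {x : H} {s : Finset ℕ} {x1 x2 : ℕ → H} {t : ℕ → Finset ℕ}
    {e1 e2 : ℕ → ℕ → H} {u : ℕ → Finset ℕ} {e3 e4 : ℕ → ℕ → H}
    (h : Δ x = ∑ i ∈ s, x1 i ⊗ₜ[k] x2 i)
    (h1 : ∀ i ∈ s, Δ (x1 i) = ∑ j ∈ t i, e1 i j ⊗ₜ[k] e2 i j)
    (h2 : ∀ i ∈ s, Δ (x2 i) = ∑ l ∈ u i, e3 i l ⊗ₜ[k] e4 i l) :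
    cD4 Δ x = ∑ i ∈ s, ∑ j ∈ t i, ∑ l ∈ u i,
      e1 i j ⊗ₜ[k] (e2 i j ⊗ₜ[k] (e3 i l ⊗ₜ[k] e4 i l)) := by
  rw [cD4, cD3_eq_sum_left h h1, map_sum]
  refine Finset.sum_congr rfl fun i hi => ?_
  simp [h2 i hi, tmul_sum]

theorem cD4_eq_sum_mid {ι : Type*} {x : H} {s : Finset ι} {x1 x2 x3 : ι → H}
    {t : ι → Finset ℕ} {y1 y2 : ι → ℕ → H}
    (h : cD3 Δ x = ∑ i ∈ s, x1 i ⊗ₜ[k] (x2 i ⊗ₜ[k] x3 i))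
    (h2 : ∀ i ∈ s, Δ (x2 i) = ∑ j ∈ t i, y1 i j ⊗ₜ[k] y2 i j) :
    cD4 Δ x = ∑ i ∈ s, ∑ j ∈ t i, x1 i ⊗ₜ[k] (y1 i j ⊗ₜ[k] (y2 i j ⊗ₜ[k] x3 i)) := by
  have hmid : cD4 Δ x =
      (TensorProduct.map LinearMap.id (TensorProduct.assoc k H H H).toLinearMap)
        ((TensorProduct.map LinearMap.id (TensorProduct.map Δ LinearMap.id))
          (cD3 Δ x)) := by
    obtain ⟨s, x1, x2, h⟩ := TensorProduct.exists_sum_nat_tmul (Δ x)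
    simp only [cD4, cD3, h, map_sum, map_tmul, LinearMap.id_coe, id_eq]
    exact Finset.sum_congr rfl fun i _ => by rw [← B.coassoc (x2 i)]; rfl
  rw [hmid, h]
  simp only [map_sum]
  refine Finset.sum_congr rfl fun i hi => ?_
  simp [h2 i hi, sum_tmul, tmul_sum]

theorem cD5_eq_sum_pairs_right {x : H} {s : Finset ℕ} {x1 x2 : ℕ → H} {t : ℕ → Finset ℕ}
    {e1 e2 : ℕ → ℕ → H} {u : ℕ → Finset ℕ} {e3 c : ℕ → ℕ → H}
    {v : ℕ → ℕ → Finset ℕ} {e4 e5 : ℕ → ℕ → ℕ → H}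
    (h : Δ x = ∑ i ∈ s, x1 i ⊗ₜ[k] x2 i)
    (h1 : ∀ i ∈ s, Δ (x1 i) = ∑ j ∈ t i, e1 i j ⊗ₜ[k] e2 i j)
    (h2 : ∀ i ∈ s, Δ (x2 i) = ∑ l ∈ u i, e3 i l ⊗ₜ[k] c i l)
    (h3 : ∀ i ∈ s, ∀ l ∈ u i, Δ (c i l) = ∑ r ∈ v i l, e4 i l r ⊗ₜ[k] e5 i l r) :
    cD5 Δ x = ∑ i ∈ s, ∑ j ∈ t i, ∑ l ∈ u i, ∑ r ∈ v i l,
      e1 i j ⊗ₜ[k] (e2 i j ⊗ₜ[k] (e3 i l ⊗ₜ[k] (e4 i l r ⊗ₜ[k] e5 i l r))) := by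
  rw [cD5, cD4_eq_sum_pairs h h1 h2]
  simp only [map_sum]
  refine Finset.sum_congr rfl fun i hi => Finset.sum_congr rfl fun j _ =>
    Finset.sum_congr rfl fun l hl => ?_
  simp [h3 i hi l hl, tmul_sum]

theorem cD5_eq_sum_mid_right {x : H} {s : Finset ℕ} {x1 x2 : ℕ → H} {t : ℕ → Finset ℕ}
    {c z : ℕ → ℕ → H} {u : ℕ → ℕ → Finset ℕ} {e1 d : ℕ → ℕ → ℕ → H}
    {v : ℕ → ℕ → ℕ → Finset ℕ} {e2 e3 : ℕ → ℕ → ℕ → ℕ → H}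
    (h : Δ x = ∑ i ∈ s, x1 i ⊗ₜ[k] x2 i)
    (h2 : ∀ i ∈ s, Δ (x2 i) = ∑ j ∈ t i, c i j ⊗ₜ[k] z i j)
    (h3 : ∀ i ∈ s, ∀ j ∈ t i, Δ (c i j) = ∑ l ∈ u i j, e1 i j l ⊗ₜ[k] d i j l)
    (h4 : ∀ i ∈ s, ∀ j ∈ t i, ∀ l ∈ u i j,
      Δ (d i j l) = ∑ r ∈ v i j l, e2 i j l r ⊗ₜ[k] e3 i j l r) :
    cD5 Δ x = ∑ i ∈ s, ∑ j ∈ t i, ∑ l ∈ u i j, ∑ r ∈ v i j l,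
      x1 i ⊗ₜ[k] (e1 i j l ⊗ₜ[k] (e2 i j l r ⊗ₜ[k] (e3 i j l r ⊗ₜ[k] z i j))) := by
  rw [cD5_eq_sum_tmul_cD4 h]
  refine Finset.sum_congr rfl fun i hi => ?_
  have h3' := cD3_eq_sum_left (h2 i hi) (h3 i hi)
  rw [Finset.sum_sigma'] at h3'
  rw [cD4_eq_sum_mid h3' fun jl hjl => h4 i hi jl.1 (Finset.mem_sigma.mp hjl).1 jl.2
    (Finset.mem_sigma.mp hjl).2, Finset.sum_sigma]
  simp [tmul_sum]

end Coalgebra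

section DualQuasiHopf

variable {k H : Type} [Field k] [AddCommGroup H] [Module k H] (B : DualQuasiHopfAlgebra k H)

local notation "Δ" => B.comul
local notation "ε" => B.counit
local notation "𝒮" => B.antipode
local notation "σ" => B.sigma
local notation "α" => B.alpha
local infix:70 " ⬝ " => B.mul

def IsQR (sInv : H →ₗ[k] H) (qR : H →ₗ[k] H →ₗ[k] k) : Prop :=
  ∀ (a b : H) (sb : Finset ℕ) (b1 b2 b3 : ℕ → H),
    cD3 Δ b = ∑ i ∈ sb, b1 i ⊗ₜ[k] (b2 i ⊗ₜ[k] b3 i) →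
    qR a b = ∑ i ∈ sb, σ a (b3 i) (sInv (b1 i)) * α (sInv (b2 i))

def IsTwistAntipode (f g : H →ₗ[k] H →ₗ[k] k) : Prop :=
  ∀ (a b : H) (sa sb : Finset ℕ) (a1 a2 a3 b1 b2 b3 : ℕ → H),
    cD3 Δ a = ∑ i ∈ sa, a1 i ⊗ₜ[k] (a2 i ⊗ₜ[k] a3 i) →
    cD3 Δ b = ∑ j ∈ sb, b1 j ⊗ₜ[k] (b2 j ⊗ₜ[k] b3 j) →
    ∑ i ∈ sa, ∑ j ∈ sb, (f (a1 i) (b1 j) * g (a3 i) (b3 j)) • 𝒮 (a2 i ⬝ b2 j) = 𝒮 b ⬝ 𝒮 a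

def IsConvLeftInverse (g f : H →ₗ[k] H →ₗ[k] k) : Prop :=
  ∀ (a b : H) (sa sb : Finset ℕ) (a1 a2 b1 b2 : ℕ → H),
    Δ a = ∑ i ∈ sa, a1 i ⊗ₜ[k] a2 i → Δ b = ∑ j ∈ sb, b1 j ⊗ₜ[k] b2 j →
    ∑ i ∈ sa, ∑ j ∈ sb, g (a1 i) (b1 j) * f (a2 i) (b2 j) = ε a * ε b

def IsU (g qR U : H →ₗ[k] H →ₗ[k] k) : Prop :=
  ∀ (a b : H) (sa sb : Finset ℕ) (a1 a2 b1 b2 : ℕ → H),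
    Δ a = ∑ i ∈ sa, a1 i ⊗ₜ[k] a2 i → Δ b = ∑ j ∈ sb, b1 j ⊗ₜ[k] b2 j →
    U a b = ∑ i ∈ sa, ∑ j ∈ sb, g (a1 i) (b1 j) * qR (𝒮 (b2 j)) (𝒮 (a2 i))

variable {B}

theorem qR_antipode {sInv : H →ₗ[k] H} {qR : H →ₗ[k] H →ₗ[k] k}
    (hsInv : Function.LeftInverse sInv 𝒮) (hqR : IsQR B sInv qR) (x : H) {c : H}
    {s : Finset ℕ} {c1 c2 : ℕ → H} {t : ℕ → Finset ℕ} {m z : ℕ → ℕ → H}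
    (h : Δ c = ∑ i ∈ s, c1 i ⊗ₜ[k] c2 i)
    (h2 : ∀ i ∈ s, Δ (c2 i) = ∑ j ∈ t i, m i j ⊗ₜ[k] z i j) :
    qR x (𝒮 c) = ∑ i ∈ s, ∑ j ∈ t i, σ x (𝒮 (c1 i)) (z i j) * α (m i j) := by
  have hS := cD3_eq_sum_left (B.comul_antipode c s c1 c2 h)
    fun i hi => B.comul_antipode (c2 i) (t i) (m i) (z i) (h2 i hi)
  rw [← sum_pairIndex s t fun i j => 𝒮 (z i j) ⊗ₜ[k] (𝒮 (m i j) ⊗ₜ[k] 𝒮 (c1 i))] at hS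
  rw [hqR x _ _ _ _ _ hS, ← sum_pairIndex]
  simp only [hsInv _]

theorem sum_alpha_smul_antipode_mul {x : H} {s : Finset ℕ} {x1 x2 : ℕ → H}
    {t : ℕ → Finset ℕ} {p q : ℕ → ℕ → H} (h : Δ x = ∑ i ∈ s, x1 i ⊗ₜ[k] x2 i)
    (h2 : ∀ i ∈ s, Δ (x2 i) = ∑ j ∈ t i, p i j ⊗ₜ[k] q i j) :
    ∑ i ∈ s, ∑ j ∈ t i, α (p i j) • (𝒮 (x1 i) ⬝ q i j) = α x • B.one := by
  have h3 := cD3_eq_sum_right h h2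
  rw [← sum_pairIndex s t fun i j => x1 i ⊗ₜ[k] (p i j ⊗ₜ[k] q i j)] at h3
  rw [← B.antipode_alpha x _ _ _ _ h3]
  exact (sum_pairIndex s t fun i j => α (p i j) • (𝒮 (x1 i) ⬝ q i j)).symm

theorem IsTwistAntipode.sum_eq_antipode_mul_antipode {f g : H →ₗ[k] H →ₗ[k] k}
    (hTwist : IsTwistAntipode B f g)
    {x y : H} {s : Finset ℕ} {x1 x2 : ℕ → H} {t : ℕ → Finset ℕ} {x3 x4 : ℕ → ℕ → H}
    {s' : Finset ℕ} {y1 y2 : ℕ → H} {t' : ℕ → Finset ℕ} {y3 y4 : ℕ → ℕ → H}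
    (hx : Δ x = ∑ i ∈ s, x1 i ⊗ₜ[k] x2 i)
    (hx2 : ∀ i ∈ s, Δ (x2 i) = ∑ j ∈ t i, x3 i j ⊗ₜ[k] x4 i j)
    (hy : Δ y = ∑ i ∈ s', y1 i ⊗ₜ[k] y2 i)
    (hy2 : ∀ i ∈ s', Δ (y2 i) = ∑ j ∈ t' i, y3 i j ⊗ₜ[k] y4 i j) :
    ∑ i ∈ s, ∑ j ∈ t i, ∑ m ∈ s', ∑ n ∈ t' m,
        (f (x1 i) (y1 m) * g (x4 i j) (y4 m n)) • 𝒮 (x3 i j ⬝ y3 m n) = 𝒮 y ⬝ 𝒮 x := by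
  have hcx := cD3_eq_sum_right hx hx2
  have hcy := cD3_eq_sum_right hy hy2
  rw [← sum_pairIndex s t fun i j => x1 i ⊗ₜ[k] (x3 i j ⊗ₜ[k] x4 i j)] at hcx
  rw [← sum_pairIndex s' t' fun i j => y1 i ⊗ₜ[k] (y3 i j ⊗ₜ[k] y4 i j)] at hcy
  rw [← hTwist x y _ _ _ _ _ _ _ _ hcx hcy, ← sum_pairIndex s t]
  simp only [← sum_pairIndex s' t']

theorem IsTwistAntipode.sum_smul_antipode_mul_antipode_expand {f g : H →ₗ[k] H →ₗ[k] k}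
    (hTwist : IsTwistAntipode B f g) {x y : H} {sx : Finset ℕ} {x1 x2 : ℕ → H}
    {sy : Finset ℕ} {y1 y2 : ℕ → H}
    {tx : ℕ → Finset ℕ} {e1 e2 : ℕ → ℕ → H} {tc : ℕ → Finset ℕ} {c1 c : ℕ → ℕ → H}
    {ty : ℕ → Finset ℕ} {f1 f2 : ℕ → ℕ → H} {td : ℕ → Finset ℕ} {d1 d : ℕ → ℕ → H}
    (hx : Δ x = ∑ i ∈ sx, x1 i ⊗ₜ[k] x2 i) (hy : Δ y = ∑ j ∈ sy, y1 j ⊗ₜ[k] y2 j)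
    (hx1 : ∀ i, Δ (x1 i) = ∑ w ∈ tx i, e1 i w ⊗ₜ[k] e2 i w)
    (hx2 : ∀ i, Δ (x2 i) = ∑ r ∈ tc i, c1 i r ⊗ₜ[k] c i r)
    (hy1 : ∀ j, Δ (y1 j) = ∑ w ∈ ty j, f1 j w ⊗ₜ[k] f2 j w)
    (hy2 : ∀ j, Δ (y2 j) = ∑ m ∈ td j, d1 j m ⊗ₜ[k] d j m) :
    ∑ i ∈ sx, ∑ j ∈ sy, g (x1 i) (y1 j) • (𝒮 (y2 j) ⬝ 𝒮 (x2 i)) =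
      ∑ i ∈ sx, ∑ w ∈ tx i, ∑ r ∈ tc i, ∑ j ∈ sy, ∑ w' ∈ ty j, ∑ m ∈ td j,
        (g (e1 i w) (f1 j w') * (f (e2 i w) (f2 j w') * g (c i r) (d j m))) •
          𝒮 (c1 i r ⬝ d1 j m) := by
  choose u c2 c3 hc using fun i r => TensorProduct.exists_sum_nat_tmul (Δ (c i r))
  choose v d2 d3 hd using fun j m => TensorProduct.exists_sum_nat_tmul (Δ (d j m))
  set Ex : H ⊗[k] (H ⊗[k] (H ⊗[k] H)) →ₗ[k] H := ∑ j ∈ sy, ∑ m ∈ td j, ∑ n ∈ v j m,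
    contractFst (g.flip (y1 j)) (contractFst (f.flip (d1 j m))
      (contractLast (𝒮 ∘ₗ B.mul.flip (d2 j m n)) (g.flip (d3 j m n))))
  have hEx : ∀ n1 n2 n3 n4, Ex (n1 ⊗ₜ[k] (n2 ⊗ₜ[k] (n3 ⊗ₜ[k] n4))) =
      ∑ j ∈ sy, ∑ m ∈ td j, ∑ n ∈ v j m,
        (g n1 (y1 j) * (f n2 (d1 j m) * g n4 (d3 j m n))) • 𝒮 (n3 ⬝ d2 j m n) := by
    intro n1 n2 n3 n4
    simp only [Ex, LinearMap.coe_sum, Finset.sum_apply, contractFst_tmul, contractLast_tmul,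
      LinearMap.comp_apply, LinearMap.flip_apply, smul_smul]
  have transfer_x := congrArg Ex ((cD4_eq_sum_right hx
    (fun i _ => hx2 i) fun i _ r _ => hc i r).symm.trans
      (cD4_eq_sum_pairs hx (fun i _ => hx1 i) fun i _ => hx2 i))
  simp only [map_sum, hEx] at transfer_x
  have transfer_y : ∀ i w r,
      ∑ j ∈ sy, ∑ m ∈ td j, ∑ n ∈ v j m,
        (g (e1 i w) (y1 j) * (f (e2 i w) (d1 j m) * g (c i r) (d3 j m n))) •
          𝒮 (c1 i r ⬝ d2 j m n) =
      ∑ j ∈ sy, ∑ w' ∈ ty j, ∑ m ∈ td j,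
        (g (e1 i w) (f1 j w') * (f (e2 i w) (f2 j w') * g (c i r) (d j m))) •
          𝒮 (c1 i r ⬝ d1 j m) := by
    intro i w r
    set Ey : H ⊗[k] (H ⊗[k] (H ⊗[k] H)) →ₗ[k] H := contractFst (g (e1 i w))
      (contractFst (f (e2 i w)) (contractLast (𝒮 ∘ₗ B.mul (c1 i r)) (g (c i r))))
    have h := congrArg Ey ((cD4_eq_sum_right hy
      (fun j _ => hy2 j) fun j _ m _ => hd j m).symm.trans
        (cD4_eq_sum_pairs hy (fun j _ => hy1 j) fun j _ => hy2 j))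
    simpa only [Ey, map_sum, contractFst_tmul, contractLast_tmul, LinearMap.comp_apply,
      smul_smul] using h
  calc ∑ i ∈ sx, ∑ j ∈ sy, g (x1 i) (y1 j) • (𝒮 (y2 j) ⬝ 𝒮 (x2 i))
      = ∑ i ∈ sx, ∑ j ∈ sy, ∑ r ∈ tc i, ∑ l ∈ u i r, ∑ m ∈ td j, ∑ n ∈ v j m,
          (g (x1 i) (y1 j) * (f (c1 i r) (d1 j m) * g (c3 i r l) (d3 j m n))) •
            𝒮 (c2 i r l ⬝ d2 j m n) := by
        refine Finset.sum_congr rfl fun i _ => Finset.sum_congr rfl fun j _ => ?_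
        rw [← hTwist.sum_eq_antipode_mul_antipode (hx2 i) (fun r _ => hc i r) (hy2 j)
          fun m _ => hd j m]
        simp only [Finset.smul_sum, smul_smul]
    _ = ∑ i ∈ sx, ∑ r ∈ tc i, ∑ l ∈ u i r, ∑ j ∈ sy, ∑ m ∈ td j, ∑ n ∈ v j m,
          (g (x1 i) (y1 j) * (f (c1 i r) (d1 j m) * g (c3 i r l) (d3 j m n))) •
            𝒮 (c2 i r l ⬝ d2 j m n) := by
        refine Finset.sum_congr rfl fun i _ => ?_
        rw [Finset.sum_comm]
        exact Finset.sum_congr rfl fun r _ => Finset.sum_comm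
    _ = _ := transfer_x
    _ = _ := by simp only [transfer_y]

theorem IsTwistAntipode.sum_smul_antipode_mul_comm {f g : H →ₗ[k] H →ₗ[k] k}
    (hTwist : IsTwistAntipode B f g) (hgf : IsConvLeftInverse B g f) {x y : H}
    {sx : Finset ℕ} {x1 x2 : ℕ → H} {sy : Finset ℕ} {y1 y2 : ℕ → H}
    (hx : Δ x = ∑ i ∈ sx, x1 i ⊗ₜ[k] x2 i) (hy : Δ y = ∑ j ∈ sy, y1 j ⊗ₜ[k] y2 j) :
    ∑ i ∈ sx, ∑ j ∈ sy, g (x2 i) (y2 j) • 𝒮 (x1 i ⬝ y1 j) =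
      ∑ i ∈ sx, ∑ j ∈ sy, g (x1 i) (y1 j) • (𝒮 (y2 j) ⬝ 𝒮 (x2 i)) := by
  choose tx e1 e2 hx1 using fun i => TensorProduct.exists_sum_nat_tmul (Δ (x1 i))
  choose tc c1 c hx2 using fun i => TensorProduct.exists_sum_nat_tmul (Δ (x2 i))
  choose ty f1 f2 hy1 using fun j => TensorProduct.exists_sum_nat_tmul (Δ (y1 j))
  choose td d1 d hy2 using fun j => TensorProduct.exists_sum_nat_tmul (Δ (y2 j))
  set Φ : H ⊗[k] H →ₗ[k] H := ∑ j ∈ sy, ∑ m ∈ td j,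
    ε (y1 j) • contractLast (𝒮 ∘ₗ B.mul.flip (d1 j m)) (g.flip (d j m))
  rw [hTwist.sum_smul_antipode_mul_antipode_expand hx hy hx1 hx2 hy1 hy2]
  symm
  calc _ = ∑ i ∈ sx, ∑ r ∈ tc i, ∑ j ∈ sy, ∑ m ∈ td j,
          (ε (x1 i) * ε (y1 j)) • (g (c i r) (d j m) • 𝒮 (c1 i r ⬝ d1 j m)) := by
        refine Finset.sum_congr rfl fun i _ => ?_
        rw [Finset.sum_comm]
        refine Finset.sum_congr rfl fun r _ => ?_
        rw [Finset.sum_comm]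
        refine Finset.sum_congr rfl fun j _ => ?_
        rw [Finset.sum_congr rfl fun w _ => Finset.sum_comm, Finset.sum_comm]
        refine Finset.sum_congr rfl fun m _ => ?_
        rw [← hgf (x1 i) (y1 j) _ _ _ _ _ _ (hx1 i) (hy1 j)]
        simp only [Finset.sum_mul, Finset.sum_smul, smul_smul, mul_assoc]
    _ = ∑ i ∈ sx, ε (x1 i) • Φ (Δ (x2 i)) := by
        refine Finset.sum_congr rfl fun i _ => ?_
        simp only [Φ, hx2, map_sum, LinearMap.coe_sum, Finset.sum_apply, LinearMap.smul_apply,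
          contractLast_tmul, LinearMap.comp_apply, LinearMap.flip_apply, Finset.smul_sum,
          smul_smul, mul_assoc]
    _ = ∑ i ∈ sx, Φ (x1 i ⊗ₜ[k] x2 i) := sum_counit_smul_map_comul Φ hx
    _ = _ := by
        refine Finset.sum_congr rfl fun i _ => ?_
        set Ψ : H ⊗[k] H →ₗ[k] H := contractLast (𝒮 ∘ₗ B.mul (x1 i)) (g (x2 i))
        calc Φ (x1 i ⊗ₜ[k] x2 i) = ∑ j ∈ sy, ε (y1 j) • Ψ (Δ (y2 j)) := by
              simp only [Φ, Ψ, hy2, map_sum, LinearMap.coe_sum, Finset.sum_apply,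
                LinearMap.smul_apply, contractLast_tmul, LinearMap.comp_apply,
                LinearMap.flip_apply, Finset.smul_sum]
          _ = ∑ j ∈ sy, Ψ (y1 j ⊗ₜ[k] y2 j) := sum_counit_smul_map_comul Ψ hy
          _ = _ := by simp only [Ψ, contractLast_tmul, LinearMap.comp_apply]

theorem sum_sigma_smul_antipode_mul_assoc {y b c : H} {sy : Finset ℕ} {y1 y2 : ℕ → H}
    {sb : Finset ℕ} {b1 b2 : ℕ → H} {sc : Finset ℕ} {c1 c2 : ℕ → H}
    (hy : Δ y = ∑ j ∈ sy, y1 j ⊗ₜ[k] y2 j) (hb : Δ b = ∑ p ∈ sb, b1 p ⊗ₜ[k] b2 p)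
    (hc : Δ c = ∑ r ∈ sc, c1 r ⊗ₜ[k] c2 r) :
    ∑ p ∈ sb, ∑ r ∈ sc, ∑ j ∈ sy, σ (𝒮 (y2 j)) (𝒮 (b2 p)) (c1 r) • ((𝒮 (y1 j) ⬝ 𝒮 (b1 p)) ⬝ c2 r) =
      ∑ p ∈ sb, ∑ r ∈ sc, ∑ j ∈ sy,
        σ (𝒮 (y1 j)) (𝒮 (b1 p)) (c2 r) • (𝒮 (y2 j) ⬝ (𝒮 (b2 p) ⬝ c1 r)) := by
  have qa := B.quasi_assoc (𝒮 y) (𝒮 b) c _ _ _ _ _ _ _ _ _ (B.comul_antipode y _ _ _ hy)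
    (B.comul_antipode b _ _ _ hb) hc
  simp only [Finset.sum_comm (s := sy)] at qa
  exact qa.symm

theorem sum_alpha_sigma_smul_antipode_mul_assoc {x y : H} {sy : Finset ℕ} {y1 y2 : ℕ → H}
    {sx : Finset ℕ} {x1 x2 : ℕ → H} {t : ℕ → Finset ℕ} {c z : ℕ → ℕ → H}
    {u : ℕ → ℕ → Finset ℕ} {e1 d : ℕ → ℕ → ℕ → H}
    {v : ℕ → ℕ → ℕ → Finset ℕ} {e2 e3 : ℕ → ℕ → ℕ → ℕ → H}
    (hy : Δ y = ∑ j ∈ sy, y1 j ⊗ₜ[k] y2 j) (hx : Δ x = ∑ i ∈ sx, x1 i ⊗ₜ[k] x2 i)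
    (hx2 : ∀ i ∈ sx, Δ (x2 i) = ∑ q ∈ t i, c i q ⊗ₜ[k] z i q)
    (hc : ∀ i ∈ sx, ∀ q ∈ t i, Δ (c i q) = ∑ r ∈ u i q, e1 i q r ⊗ₜ[k] d i q r)
    (hd : ∀ i ∈ sx, ∀ q ∈ t i, ∀ r ∈ u i q,
      Δ (d i q r) = ∑ w ∈ v i q r, e2 i q r w ⊗ₜ[k] e3 i q r w) :
    ∑ i ∈ sx, ∑ q ∈ t i, ∑ r ∈ u i q, ∑ w ∈ v i q r, ∑ j ∈ sy,
        (α (e2 i q r w) * σ (𝒮 (y2 j)) (𝒮 (e1 i q r)) (e3 i q r w)) •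
          ((𝒮 (y1 j) ⬝ 𝒮 (x1 i)) ⬝ z i q) =
      ∑ i ∈ sx, ∑ q ∈ t i, ∑ r ∈ u i q, ∑ w ∈ v i q r, ∑ j ∈ sy,
        (α (e2 i q r w) * σ (𝒮 (y1 j)) (𝒮 (x1 i)) (z i q)) •
          (𝒮 (y2 j) ⬝ (𝒮 (e1 i q r) ⬝ e3 i q r w)) := by
  obtain ⟨sP, P, W, hPW⟩ := TensorProduct.exists_sum_nat_tmul (Δ x)
  choose tP l1 l2 hP using fun i => TensorProduct.exists_sum_nat_tmul (Δ (P i))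
  choose tW m b hW using fun i => TensorProduct.exists_sum_nat_tmul (Δ (W i))
  choose tb b1 b2 hb using fun i l => TensorProduct.exists_sum_nat_tmul (Δ (b i l))
  have treeC := cD5_eq_sum_mid_right hx hx2 hc hd
  have treeB := cD5_eq_sum_pairs_right hPW (fun i _ => hP i)
    (fun i _ => hW i) fun i _ l _ => hb i l
  set E₁ : H ⊗[k] (H ⊗[k] (H ⊗[k] (H ⊗[k] H))) →ₗ[k] H := ∑ j ∈ sy,
    applyFst (B.mul ∘ₗ B.mul (𝒮 (y1 j)) ∘ₗ 𝒮) (TensorProduct.lift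
      (contractFstₗ α ∘ₗ contractFstFlipₗ LinearMap.id ∘ₗ σ (𝒮 (y2 j)) ∘ₗ 𝒮))
  set E₂ : H ⊗[k] (H ⊗[k] (H ⊗[k] (H ⊗[k] H))) →ₗ[k] H := ∑ j ∈ sy, TensorProduct.lift
    (applyFstₗ (LinearMap.llcomp k H H H (B.mul (𝒮 (y2 j))) ∘ₗ B.mul ∘ₗ 𝒮) ∘ₗ
      contractFstₗ α ∘ₗ contractLastₗ LinearMap.id ∘ₗ σ (𝒮 (y1 j)) ∘ₗ 𝒮)
  have transfer₁ := congrArg E₁ (treeC.symm.trans treeB)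
  have transfer₂ := congrArg E₂ (treeB.symm.trans treeC)
  simp only [E₁, E₂, map_sum, LinearMap.coe_sum, Finset.sum_apply, applyFst_tmul,
    TensorProduct.lift.tmul, LinearMap.comp_apply, contractFstₗ_apply,
    contractFstFlipₗ_apply, contractLastₗ_apply, applyFstₗ_apply, contractFst_tmul,
    contractLast_tmul, LinearMap.llcomp_apply, LinearMap.id_coe, id_eq, map_smul,
    smul_smul] at transfer₁ transfer₂
  rw [transfer₁, ← transfer₂]
  refine Finset.sum_congr rfl fun i _ => ?_
  rw [Finset.sum_comm]
  conv_rhs => rw [Finset.sum_comm]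
  refine Finset.sum_congr rfl fun l _ => ?_
  simp only [← smul_smul, ← Finset.smul_sum]
  rw [sum_sigma_smul_antipode_mul_assoc hy (hP i) (hb i l)]

theorem IsQR.sum_smul_antipode_mul_mul {sInv : H →ₗ[k] H} {qR : H →ₗ[k] H →ₗ[k] k}
    (hqR : IsQR B sInv qR) (hsInv : Function.LeftInverse sInv 𝒮) {x y : H}
    {sy : Finset ℕ} {y1 y2 : ℕ → H} {sx : Finset ℕ} {x1 x2 : ℕ → H}
    {t : ℕ → Finset ℕ} {c z : ℕ → ℕ → H}
    (hy : Δ y = ∑ j ∈ sy, y1 j ⊗ₜ[k] y2 j) (hx : Δ x = ∑ i ∈ sx, x1 i ⊗ₜ[k] x2 i)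
    (hx2 : ∀ i ∈ sx, Δ (x2 i) = ∑ q ∈ t i, c i q ⊗ₜ[k] z i q) :
    ∑ i ∈ sx, ∑ q ∈ t i, ∑ j ∈ sy,
        qR (𝒮 (y2 j)) (𝒮 (c i q)) • ((𝒮 (y1 j) ⬝ 𝒮 (x1 i)) ⬝ z i q) =
      ∑ j ∈ sy, qR (𝒮 (y1 j)) (𝒮 x) • 𝒮 (y2 j) := by
  choose u e1 d hc using fun i q => TensorProduct.exists_sum_nat_tmul (Δ (c i q))
  choose v e2 e3 hd using fun i q r => TensorProduct.exists_sum_nat_tmul (Δ (d i q r))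
  calc _ = ∑ i ∈ sx, ∑ q ∈ t i, ∑ r ∈ u i q, ∑ w ∈ v i q r, ∑ j ∈ sy,
          (α (e2 i q r w) * σ (𝒮 (y2 j)) (𝒮 (e1 i q r)) (e3 i q r w)) •
            ((𝒮 (y1 j) ⬝ 𝒮 (x1 i)) ⬝ z i q) := by
        refine Finset.sum_congr rfl fun i _ => Finset.sum_congr rfl fun q _ => ?_
        simp only [qR_antipode hsInv hqR _ (hc i q) fun r _ => hd i q r, Finset.sum_smul,
          mul_comm (σ _ _ _)]
        rw [Finset.sum_comm]
        exact Finset.sum_congr rfl fun r _ => Finset.sum_comm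
    _ = ∑ i ∈ sx, ∑ q ∈ t i, ∑ r ∈ u i q, ∑ w ∈ v i q r, ∑ j ∈ sy,
          (α (e2 i q r w) * σ (𝒮 (y1 j)) (𝒮 (x1 i)) (z i q)) •
            (𝒮 (y2 j) ⬝ (𝒮 (e1 i q r) ⬝ e3 i q r w)) :=
        sum_alpha_sigma_smul_antipode_mul_assoc hy hx hx2 (fun i _ q _ => hc i q)
          fun i _ q _ r _ => hd i q r
    _ = ∑ i ∈ sx, ∑ q ∈ t i, ∑ j ∈ sy,
          (σ (𝒮 (y1 j)) (𝒮 (x1 i)) (z i q) * α (c i q)) • 𝒮 (y2 j) := by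
        refine Finset.sum_congr rfl fun i _ => Finset.sum_congr rfl fun q _ => ?_
        rw [Finset.sum_congr rfl fun r _ => Finset.sum_comm, Finset.sum_comm]
        refine Finset.sum_congr rfl fun j _ => ?_
        calc _ = σ (𝒮 (y1 j)) (𝒮 (x1 i)) (z i q) •
              (𝒮 (y2 j) ⬝ ∑ r ∈ u i q, ∑ w ∈ v i q r,
                α (e2 i q r w) • (𝒮 (e1 i q r) ⬝ e3 i q r w)) := by
              simp only [map_sum, map_smul, Finset.smul_sum, smul_smul, mul_comm]
          _ = _ := by
              rw [sum_alpha_smul_antipode_mul (hc i q) fun r _ => hd i q r, map_smul,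
                B.mul_one, smul_smul]
    _ = _ := by
        simp only [qR_antipode hsInv hqR _ hx hx2, Finset.sum_smul]
        rw [Finset.sum_comm]
        exact Finset.sum_congr rfl fun i _ => Finset.sum_comm

variable {sInv : H →ₗ[k] H} {g qR U : H →ₗ[k] H →ₗ[k] k} {a b : H}
  {sa : Finset ℕ} {a1 a2 : ℕ → H} {ta : ℕ → Finset ℕ} {a3 c : ℕ → ℕ → H}
  {tc : ℕ → ℕ → Finset ℕ} {a4 a5 : ℕ → ℕ → ℕ → H}
  {sb : Finset ℕ} {b1 b2 : ℕ → H} {tb : ℕ → Finset ℕ} {b3 b4 : ℕ → ℕ → H}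
  {td : ℕ → Finset ℕ} {d1 d2 : ℕ → ℕ → H} {tu : ℕ → Finset ℕ} {u v : ℕ → ℕ → H}
  {s₃ : Finset ℕ} {x1 x2 x3 : ℕ → H}

theorem IsU.sum_smul_antipode (hU : IsU B g qR U) (hqR : IsQR B sInv qR)
    (hsInv : Function.LeftInverse sInv 𝒮)
    (ha : Δ a = ∑ p ∈ sa, a1 p ⊗ₜ[k] a2 p) (ha2 : ∀ p, Δ (a2 p) = ∑ q ∈ ta p, a3 p q ⊗ₜ[k] c p q)
    (hc : ∀ p q, Δ (c p q) = ∑ h ∈ tc p q, a4 p q h ⊗ₜ[k] a5 p q h)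
    (hb : Δ b = ∑ j ∈ sb, b1 j ⊗ₜ[k] b2 j) (hb2 : ∀ j, Δ (b2 j) = ∑ m ∈ tb j, b3 j m ⊗ₜ[k] b4 j m) :
    ∑ j ∈ sb, U a (b1 j) • 𝒮 (b2 j) =
      ∑ p ∈ sa, ∑ j ∈ sb, ∑ q ∈ ta p, ∑ h ∈ tc p q, ∑ m ∈ tb j,
        (g (a1 p) (b1 j) * qR (𝒮 (b4 j m)) (𝒮 (a4 p q h))) •
          ((𝒮 (b3 j m) ⬝ 𝒮 (a3 p q)) ⬝ a5 p q h) := by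
  choose tl u v hb1 using fun j => TensorProduct.exists_sum_nat_tmul (Δ (b1 j))
  have transfer : ∀ p, ∑ j ∈ sb, ∑ l ∈ tl j,
      (g (a1 p) (u j l) * qR (𝒮 (v j l)) (𝒮 (a2 p))) • 𝒮 (b2 j) =
      ∑ j ∈ sb, ∑ m ∈ tb j, (g (a1 p) (b1 j) * qR (𝒮 (b3 j m)) (𝒮 (a2 p))) • 𝒮 (b4 j m) := by
    intro p
    set E : H ⊗[k] (H ⊗[k] H) →ₗ[k] H :=
      contractFst (g (a1 p)) (contractFst (qR.flip (𝒮 (a2 p)) ∘ₗ 𝒮) 𝒮)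
    have h := congrArg E ((cD3_eq_sum_left hb fun j _ => hb1 j).symm.trans
      (cD3_eq_sum_right hb fun j _ => hb2 j))
    simpa only [E, map_sum, contractFst_tmul, LinearMap.comp_apply, LinearMap.flip_apply,
      smul_smul] using h
  calc _ = ∑ p ∈ sa, ∑ j ∈ sb, ∑ l ∈ tl j,
          (g (a1 p) (u j l) * qR (𝒮 (v j l)) (𝒮 (a2 p))) • 𝒮 (b2 j) := by
        simp only [hU a _ _ _ _ _ _ _ ha (hb1 _), Finset.sum_smul]
        exact Finset.sum_comm
    _ = _ := by
        refine Finset.sum_congr rfl fun p _ => ?_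
        rw [transfer]
        refine Finset.sum_congr rfl fun j _ => ?_
        simp only [← smul_smul, ← Finset.smul_sum]
        rw [← hqR.sum_smul_antipode_mul_mul hsInv (hb2 j) (ha2 p) fun q _ => hc p q]

theorem IsU.sum_smul_antipode_mul_mul (hU : IsU B g qR U)
    (hx : cD3 Δ a = ∑ i ∈ s₃, x1 i ⊗ₜ[k] (x2 i ⊗ₜ[k] x3 i))
    (ha : Δ a = ∑ p ∈ sa, a1 p ⊗ₜ[k] a2 p) (ha1 : ∀ p, Δ (a1 p) = ∑ w ∈ td p, d1 p w ⊗ₜ[k] d2 p w)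
    (ha2 : ∀ p, Δ (a2 p) = ∑ q ∈ ta p, a3 p q ⊗ₜ[k] c p q)
    (hb : Δ b = ∑ j ∈ sb, b1 j ⊗ₜ[k] b2 j) (hb1 : ∀ j, Δ (b1 j) = ∑ l ∈ tu j, u j l ⊗ₜ[k] v j l) :
    ∑ i ∈ s₃, ∑ j ∈ sb, U (x2 i) (b2 j) • (𝒮 (x1 i ⬝ b1 j) ⬝ x3 i) =
      ∑ p ∈ sa, ∑ q ∈ ta p, ∑ j ∈ sb, ∑ w ∈ td p, ∑ l ∈ tu j,
        (g (d2 p w) (v j l) * qR (𝒮 (b2 j)) (𝒮 (a3 p q))) • (𝒮 (d1 p w ⬝ u j l) ⬝ c p q) := by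
  choose te e1 e2 hx2 using fun i => TensorProduct.exists_sum_nat_tmul (Δ (x2 i))
  choose tb b3 b4 hb2 using fun j => TensorProduct.exists_sum_nat_tmul (Δ (b2 j))
  set Ea : H ⊗[k] (H ⊗[k] (H ⊗[k] H)) →ₗ[k] H := ∑ j ∈ sb, ∑ m ∈ tb j,
    applyFst (B.mul ∘ₗ 𝒮 ∘ₗ B.mul.flip (b1 j)) (contractFst (g.flip (b3 j m))
      (contractFst (qR (𝒮 (b4 j m)) ∘ₗ 𝒮) LinearMap.id))
  have transfer_a := congrArg Ea ((cD4_eq_sum_mid hx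
    fun i _ => hx2 i).symm.trans
      (cD4_eq_sum_pairs ha (fun p _ => ha1 p) fun p _ => ha2 p))
  simp only [Ea, map_sum, LinearMap.coe_sum, Finset.sum_apply, applyFst_tmul,
    contractFst_tmul, LinearMap.comp_apply, LinearMap.flip_apply, LinearMap.id_coe, id_eq,
    map_smul, smul_smul] at transfer_a
  have transfer_b : ∀ p w q, ∑ j ∈ sb, ∑ m ∈ tb j,
      (g (d2 p w) (b3 j m) * qR (𝒮 (b4 j m)) (𝒮 (a3 p q))) • (𝒮 (d1 p w ⬝ b1 j) ⬝ c p q) =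
      ∑ j ∈ sb, ∑ l ∈ tu j,
        (g (d2 p w) (v j l) * qR (𝒮 (b2 j)) (𝒮 (a3 p q))) • (𝒮 (d1 p w ⬝ u j l) ⬝ c p q) := by
    intro p w q
    set Eb : H ⊗[k] (H ⊗[k] H) →ₗ[k] H :=
      applyFst (B.mul ∘ₗ 𝒮 ∘ₗ B.mul (d1 p w))
        (contractFst (g (d2 p w)) (LinearMap.smulRight (qR.flip (𝒮 (a3 p q)) ∘ₗ 𝒮) (c p q)))
    have h := congrArg Eb ((cD3_eq_sum_right hb
      fun j _ => hb2 j).symm.trans (cD3_eq_sum_left hb fun j _ => hb1 j))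
    simpa only [Eb, map_sum, applyFst_tmul, contractFst_tmul, LinearMap.comp_apply,
      LinearMap.flip_apply, LinearMap.smulRight_apply, map_smul, smul_smul] using h
  calc _ = ∑ i ∈ s₃, ∑ r ∈ te i, ∑ j ∈ sb, ∑ m ∈ tb j,
          (g (e1 i r) (b3 j m) * qR (𝒮 (b4 j m)) (𝒮 (e2 i r))) • (𝒮 (x1 i ⬝ b1 j) ⬝ x3 i) := by
        simp only [hU _ _ _ _ _ _ _ _ (hx2 _) (hb2 _), Finset.sum_smul]
        exact Finset.sum_congr rfl fun i _ => Finset.sum_comm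
    _ = ∑ p ∈ sa, ∑ w ∈ td p, ∑ q ∈ ta p, ∑ j ∈ sb, ∑ m ∈ tb j,
          (g (d2 p w) (b3 j m) * qR (𝒮 (b4 j m)) (𝒮 (a3 p q))) • (𝒮 (d1 p w ⬝ b1 j) ⬝ c p q) :=
        transfer_a
    _ = _ := by
        simp only [transfer_b]
        exact Finset.sum_congr rfl fun p _ => Finset.sum_comm.trans
          (Finset.sum_congr rfl fun q _ => Finset.sum_comm)

theorem IsTwistAntipode.sum_smul_antipode_mul_mul_reassoc {f : H →ₗ[k] H →ₗ[k] k}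
    (hTwist : IsTwistAntipode B f g) (hgf : IsConvLeftInverse B g f)
    (ha : Δ a = ∑ p ∈ sa, a1 p ⊗ₜ[k] a2 p) (ha1 : ∀ p, Δ (a1 p) = ∑ w ∈ td p, d1 p w ⊗ₜ[k] d2 p w)
    (ha2 : ∀ p, Δ (a2 p) = ∑ q ∈ ta p, a3 p q ⊗ₜ[k] c p q)
    (hc : ∀ p q, Δ (c p q) = ∑ h ∈ tc p q, a4 p q h ⊗ₜ[k] a5 p q h)
    (hb : Δ b = ∑ j ∈ sb, b1 j ⊗ₜ[k] b2 j) (hb1 : ∀ j, Δ (b1 j) = ∑ l ∈ tu j, u j l ⊗ₜ[k] v j l)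
    (hb2 : ∀ j, Δ (b2 j) = ∑ m ∈ tb j, b3 j m ⊗ₜ[k] b4 j m) :
    ∑ p ∈ sa, ∑ q ∈ ta p, ∑ j ∈ sb, ∑ w ∈ td p, ∑ l ∈ tu j,
        (g (d2 p w) (v j l) * qR (𝒮 (b2 j)) (𝒮 (a3 p q))) • (𝒮 (d1 p w ⬝ u j l) ⬝ c p q) =
      ∑ p ∈ sa, ∑ j ∈ sb, ∑ q ∈ ta p, ∑ h ∈ tc p q, ∑ m ∈ tb j,
        (g (a1 p) (b1 j) * qR (𝒮 (b4 j m)) (𝒮 (a4 p q h))) •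
          ((𝒮 (b3 j m) ⬝ 𝒮 (a3 p q)) ⬝ a5 p q h) := by
  set Ea : H ⊗[k] (H ⊗[k] (H ⊗[k] H)) →ₗ[k] H := ∑ j ∈ sb, ∑ l ∈ tu j,
    contractFst (g.flip (u j l)) (applyFst (B.mul ∘ₗ B.mul (𝒮 (v j l)) ∘ₗ 𝒮)
      (contractFst (qR (𝒮 (b2 j)) ∘ₗ 𝒮) LinearMap.id))
  have transfer_a := congrArg Ea ((cD4_eq_sum_pairs ha
    (fun p _ => ha1 p) fun p _ => ha2 p).symm.trans
      (cD4_eq_sum_right ha (fun p _ => ha2 p) fun p _ q _ => hc p q))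
  simp only [Ea, map_sum, LinearMap.coe_sum, Finset.sum_apply, applyFst_tmul,
    contractFst_tmul, LinearMap.comp_apply, LinearMap.flip_apply, LinearMap.id_coe, id_eq,
    map_smul, smul_smul] at transfer_a
  have transfer_b : ∀ p q h, ∑ j ∈ sb, ∑ l ∈ tu j,
      (g (a1 p) (u j l) * qR (𝒮 (b2 j)) (𝒮 (a4 p q h))) • ((𝒮 (v j l) ⬝ 𝒮 (a3 p q)) ⬝ a5 p q h) =
      ∑ j ∈ sb, ∑ m ∈ tb j, (g (a1 p) (b1 j) * qR (𝒮 (b4 j m)) (𝒮 (a4 p q h))) •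
        ((𝒮 (b3 j m) ⬝ 𝒮 (a3 p q)) ⬝ a5 p q h) := by
    intro p q h
    set Eb : H ⊗[k] (H ⊗[k] H) →ₗ[k] H := contractFst (g (a1 p))
      (applyFst (B.mul ∘ₗ B.mul.flip (𝒮 (a3 p q)) ∘ₗ 𝒮)
        (LinearMap.smulRight (qR.flip (𝒮 (a4 p q h)) ∘ₗ 𝒮) (a5 p q h)))
    have h := congrArg Eb ((cD3_eq_sum_left hb
      fun j _ => hb1 j).symm.trans (cD3_eq_sum_right hb fun j _ => hb2 j))
    simpa only [Eb, map_sum, applyFst_tmul, contractFst_tmul, LinearMap.comp_apply,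
      LinearMap.flip_apply, LinearMap.smulRight_apply, map_smul, smul_smul] using h
  calc _ = ∑ p ∈ sa, ∑ q ∈ ta p, ∑ j ∈ sb, ∑ w ∈ td p, ∑ l ∈ tu j,
          (g (d1 p w) (u j l) * qR (𝒮 (b2 j)) (𝒮 (a3 p q))) •
            ((𝒮 (v j l) ⬝ 𝒮 (d2 p w)) ⬝ c p q) := by
        refine Finset.sum_congr rfl fun p _ => Finset.sum_congr rfl fun q _ =>
          Finset.sum_congr rfl fun j _ => ?_
        have star := hTwist.sum_smul_antipode_mul_comm hgf (ha1 p) (hb1 j)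
        apply_fun fun z => qR (𝒮 (b2 j)) (𝒮 (a3 p q)) • (z ⬝ c p q) at star
        simpa only [map_sum, Finset.smul_sum, LinearMap.sum_apply, map_smul,
          LinearMap.smul_apply, smul_smul, mul_comm] using star
    _ = ∑ p ∈ sa, ∑ q ∈ ta p, ∑ h ∈ tc p q, ∑ j ∈ sb, ∑ l ∈ tu j,
          (g (a1 p) (u j l) * qR (𝒮 (b2 j)) (𝒮 (a4 p q h))) •
            ((𝒮 (v j l) ⬝ 𝒮 (a3 p q)) ⬝ a5 p q h) := by
        rw [← transfer_a]
        exact Finset.sum_congr rfl fun p _ =>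
          (Finset.sum_congr rfl fun q _ => Finset.sum_comm).trans Finset.sum_comm
    _ = _ := by
        simp only [transfer_b]
        exact Finset.sum_congr rfl fun p _ =>
          (Finset.sum_congr rfl fun q _ => Finset.sum_comm).trans Finset.sum_comm

end DualQuasiHopf

end DQH

open DQH in
theorem U_relation_one_general {k H : Type} [Field k] [AddCommGroup H] [Module k H]
    (B : DualQuasiHopfAlgebra k H)
    (sInv : H →ₗ[k] H)
    (hsInv₁ : ∀ a : H, sInv (B.antipode a) = a)
    (qR : H →ₗ[k] H →ₗ[k] k)
    (hqR : ∀ (a b : H) (sb : Finset ℕ) (b1 b2 b3 : ℕ → H),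
      cD3 B.comul b = ∑ i ∈ sb, b1 i ⊗ₜ[k] (b2 i ⊗ₜ[k] b3 i) →
      qR a b = ∑ i ∈ sb, B.sigma a (b3 i) (sInv (b1 i)) * B.alpha (sInv (b2 i)))
    (f g : H →ₗ[k] H →ₗ[k] k)
    (hgf : ∀ (a b : H) (sa sb : Finset ℕ) (a1 a2 b1 b2 : ℕ → H),
      B.comul a = ∑ i ∈ sa, a1 i ⊗ₜ[k] a2 i →
      B.comul b = ∑ j ∈ sb, b1 j ⊗ₜ[k] b2 j →
      ∑ i ∈ sa, ∑ j ∈ sb, g (a1 i) (b1 j) * f (a2 i) (b2 j) = B.counit a * B.counit b)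
    (hTwist : ∀ (a b : H) (sa sb : Finset ℕ) (a1 a2 a3 b1 b2 b3 : ℕ → H),
      cD3 B.comul a = ∑ i ∈ sa, a1 i ⊗ₜ[k] (a2 i ⊗ₜ[k] a3 i) →
      cD3 B.comul b = ∑ j ∈ sb, b1 j ⊗ₜ[k] (b2 j ⊗ₜ[k] b3 j) →
      ∑ i ∈ sa, ∑ j ∈ sb,
          (f (a1 i) (b1 j) * g (a3 i) (b3 j)) • B.antipode (B.mul (a2 i) (b2 j)) =
        B.mul (B.antipode b) (B.antipode a))
    (U : H →ₗ[k] H →ₗ[k] k)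
    (hU : ∀ (a b : H) (sa sb : Finset ℕ) (a1 a2 b1 b2 : ℕ → H),
      B.comul a = ∑ i ∈ sa, a1 i ⊗ₜ[k] a2 i →
      B.comul b = ∑ j ∈ sb, b1 j ⊗ₜ[k] b2 j →
      U a b = ∑ i ∈ sa, ∑ j ∈ sb,
        g (a1 i) (b1 j) * qR (B.antipode (b2 j)) (B.antipode (a2 i)))
    :
    ∀ (a b : H) (sa3 sb : Finset ℕ) (a1' a2' a3' b1 b2 : ℕ → H),
    cD3 B.comul a = ∑ i ∈ sa3, a1' i ⊗ₜ[k] (a2' i ⊗ₜ[k] a3' i) →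
    B.comul b = ∑ j ∈ sb, b1 j ⊗ₜ[k] b2 j →
    ∑ j ∈ sb, U a (b1 j) • B.antipode (b2 j) =
      ∑ i ∈ sa3, ∑ j ∈ sb,
        U (a2' i) (b2 j) • B.mul (B.antipode (B.mul (a1' i) (b1 j))) (a3' i) := by
  intro a b s₃ sb x1 x2 x3 b1 b2 hx hb
  obtain ⟨sa, a1, a2, ha⟩ := TensorProduct.exists_sum_nat_tmul (B.comul a)
  choose td d1 d2 ha1 using fun p => TensorProduct.exists_sum_nat_tmul (B.comul (a1 p))
  choose ta a3 c ha2 using fun p => TensorProduct.exists_sum_nat_tmul (B.comul (a2 p))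
  choose tc a4 a5 hc using fun p q => TensorProduct.exists_sum_nat_tmul (B.comul (c p q))
  choose tu u v hb1 using fun j => TensorProduct.exists_sum_nat_tmul (B.comul (b1 j))
  choose tb b3 b4 hb2 using fun j => TensorProduct.exists_sum_nat_tmul (B.comul (b2 j))
  rw [IsU.sum_smul_antipode hU hqR hsInv₁ ha ha2 hc hb hb2,
    IsU.sum_smul_antipode_mul_mul hU hx ha ha1 ha2 hb hb1,
    IsTwistAntipode.sum_smul_antipode_mul_mul_reassoc hTwist hgf ha ha1 ha2 hc hb hb1 hb2]

open DQH in
/-- Lemma 2.2 (2.9): with `U(a,b) = g(a₁,b₁) q^R(s(b₂),s(a₂))`,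
one has `U(a,b₁)s(b₂) = s(a₁b₁) U(a₂,b₂) a₃`. -/
theorem U_relation_one {k H : Type} [Field k] [AddCommGroup H] [Module k H]
    (B : DualQuasiHopfAlgebra k H)
    (sInv : H →ₗ[k] H)
    (hsInv₁ : ∀ a : H, sInv (B.antipode a) = a)
    (hsInv₂ : ∀ a : H, B.antipode (sInv a) = a)
    (qR : H →ₗ[k] H →ₗ[k] k)
    (hqR : ∀ (a b : H) (sb : Finset ℕ) (b1 b2 b3 : ℕ → H),
      cD3 B.comul b = ∑ i ∈ sb, b1 i ⊗ₜ[k] (b2 i ⊗ₜ[k] b3 i) →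
      qR a b = ∑ i ∈ sb, B.sigma a (b3 i) (sInv (b1 i)) * B.alpha (sInv (b2 i)))
    (f g : H →ₗ[k] H →ₗ[k] k)
    (hfg : ∀ (a b : H) (sa sb : Finset ℕ) (a1 a2 b1 b2 : ℕ → H),
      B.comul a = ∑ i ∈ sa, a1 i ⊗ₜ[k] a2 i →
      B.comul b = ∑ j ∈ sb, b1 j ⊗ₜ[k] b2 j →
      ∑ i ∈ sa, ∑ j ∈ sb, f (a1 i) (b1 j) * g (a2 i) (b2 j) = B.counit a * B.counit b)
    (hgf : ∀ (a b : H) (sa sb : Finset ℕ) (a1 a2 b1 b2 : ℕ → H),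
      B.comul a = ∑ i ∈ sa, a1 i ⊗ₜ[k] a2 i →
      B.comul b = ∑ j ∈ sb, b1 j ⊗ₜ[k] b2 j →
      ∑ i ∈ sa, ∑ j ∈ sb, g (a1 i) (b1 j) * f (a2 i) (b2 j) = B.counit a * B.counit b)
    (hTwist : ∀ (a b : H) (sa sb : Finset ℕ) (a1 a2 a3 b1 b2 b3 : ℕ → H),
      cD3 B.comul a = ∑ i ∈ sa, a1 i ⊗ₜ[k] (a2 i ⊗ₜ[k] a3 i) →
      cD3 B.comul b = ∑ j ∈ sb, b1 j ⊗ₜ[k] (b2 j ⊗ₜ[k] b3 j) →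
      ∑ i ∈ sa, ∑ j ∈ sb,
          (f (a1 i) (b1 j) * g (a3 i) (b3 j)) • B.antipode (B.mul (a2 i) (b2 j)) =
        B.mul (B.antipode b) (B.antipode a))
    (nu : H →ₗ[k] H →ₗ[k] H →ₗ[k] H →ₗ[k] k)
    (hnu : ∀ (a b c d : H) (sa sb sc : Finset ℕ) (a1 a2 b1 b2 c1 c2 : ℕ → H),
      B.comul a = ∑ i ∈ sa, a1 i ⊗ₜ[k] a2 i →
      B.comul b = ∑ j ∈ sb, b1 j ⊗ₜ[k] b2 j →
      B.comul c = ∑ l ∈ sc, c1 l ⊗ₜ[k] c2 l →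
      nu a b c d = ∑ i ∈ sa, ∑ j ∈ sb, ∑ l ∈ sc,
        B.sigma (a1 i) (b1 j) (c1 l) * B.sigmaInv (B.mul (a2 i) (b2 j)) (c2 l) d)
    (lam : H →ₗ[k] H →ₗ[k] k)
    (hlam : ∀ (a b : H) (sa sb : Finset ℕ) (a1 a2 a3 b1 b2 b3 : ℕ → H),
      cD3 B.comul a = ∑ i ∈ sa, a1 i ⊗ₜ[k] (a2 i ⊗ₜ[k] a3 i) →
      cD3 B.comul b = ∑ j ∈ sb, b1 j ⊗ₜ[k] (b2 j ⊗ₜ[k] b3 j) →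
      lam a b = ∑ i ∈ sa, ∑ j ∈ sb,
        nu (B.antipode (b1 j)) (B.antipode (a1 i)) (a3 i) (b3 j) *
          B.alpha (a2 i) * B.alpha (b2 j))
    (hf : ∀ (a b : H) (sa sb : Finset ℕ) (a1 a2 a3 a4 a5 b1 b2 b3 b4 b5 : ℕ → H),
      cD5 B.comul a =
        ∑ i ∈ sa, a1 i ⊗ₜ[k] (a2 i ⊗ₜ[k] (a3 i ⊗ₜ[k] (a4 i ⊗ₜ[k] a5 i))) →
      cD5 B.comul b =
        ∑ j ∈ sb, b1 j ⊗ₜ[k] (b2 j ⊗ₜ[k] (b3 j ⊗ₜ[k] (b4 j ⊗ₜ[k] b5 j))) →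
      f a b = ∑ i ∈ sa, ∑ j ∈ sb,
        B.sigmaInv (B.mul (B.antipode (b1 j)) (B.antipode (a1 i)))
            (B.mul (a3 i) (b3 j)) (B.antipode (B.mul (a5 i) (b5 j))) *
          lam (a2 i) (b2 j) * B.beta (B.mul (a4 i) (b4 j)))
    (hf_alpha : ∀ (a b : H) (sa sb : Finset ℕ) (a1 a2 b1 b2 : ℕ → H),
      B.comul a = ∑ i ∈ sa, a1 i ⊗ₜ[k] a2 i →
      B.comul b = ∑ j ∈ sb, b1 j ⊗ₜ[k] b2 j →
      ∑ i ∈ sa, ∑ j ∈ sb, f (a1 i) (b1 j) * B.alpha (B.mul (a2 i) (b2 j)) = lam a b)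
    (mu : H →ₗ[k] H →ₗ[k] H →ₗ[k] H →ₗ[k] k)
    (hmu : ∀ (a b c d : H) (sa sb sc : Finset ℕ) (a1 a2 b1 b2 c1 c2 : ℕ → H),
      B.comul a = ∑ i ∈ sa, a1 i ⊗ₜ[k] a2 i →
      B.comul b = ∑ j ∈ sb, b1 j ⊗ₜ[k] b2 j →
      B.comul c = ∑ l ∈ sc, c1 l ⊗ₜ[k] c2 l →
      mu a b c d = ∑ i ∈ sa, ∑ j ∈ sb, ∑ l ∈ sc,
        B.sigma (B.mul (a1 i) (b1 j)) (c1 l) d * B.sigmaInv (a2 i) (b2 j) (c2 l))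
    (chi : H →ₗ[k] H →ₗ[k] k)
    (hchi : ∀ (a b : H) (sa sb : Finset ℕ) (a1 a2 a3 b1 b2 b3 : ℕ → H),
      cD3 B.comul a = ∑ i ∈ sa, a1 i ⊗ₜ[k] (a2 i ⊗ₜ[k] a3 i) →
      cD3 B.comul b = ∑ j ∈ sb, b1 j ⊗ₜ[k] (b2 j ⊗ₜ[k] b3 j) →
      chi a b = ∑ i ∈ sa, ∑ j ∈ sb,
        mu (a1 i) (b1 j) (B.antipode (b3 j)) (B.antipode (a3 i)) *
          B.beta (a2 i) * B.beta (b2 j))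
    (hg : ∀ (a b : H) (sa sb : Finset ℕ) (a1 a2 a3 a4 a5 b1 b2 b3 b4 b5 : ℕ → H),
      cD5 B.comul a =
        ∑ i ∈ sa, a1 i ⊗ₜ[k] (a2 i ⊗ₜ[k] (a3 i ⊗ₜ[k] (a4 i ⊗ₜ[k] a5 i))) →
      cD5 B.comul b =
        ∑ j ∈ sb, b1 j ⊗ₜ[k] (b2 j ⊗ₜ[k] (b3 j ⊗ₜ[k] (b4 j ⊗ₜ[k] b5 j))) →
      g a b = ∑ i ∈ sa, ∑ j ∈ sb,
        B.sigmaInv (B.antipode (B.mul (a1 i) (b1 j))) (B.mul (a3 i) (b3 j))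
            (B.mul (B.antipode (b5 j)) (B.antipode (a5 i))) *
          chi (a4 i) (b4 j) * B.alpha (B.mul (a2 i) (b2 j)))
    (U : H →ₗ[k] H →ₗ[k] k)
    (hU : ∀ (a b : H) (sa sb : Finset ℕ) (a1 a2 b1 b2 : ℕ → H),
      B.comul a = ∑ i ∈ sa, a1 i ⊗ₜ[k] a2 i →
      B.comul b = ∑ j ∈ sb, b1 j ⊗ₜ[k] b2 j →
      U a b = ∑ i ∈ sa, ∑ j ∈ sb,
        g (a1 i) (b1 j) * qR (B.antipode (b2 j)) (B.antipode (a2 i)))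
    :
    ∀ (a b : H) (sa3 sb : Finset ℕ) (a1' a2' a3' b1 b2 : ℕ → H),
    cD3 B.comul a = ∑ i ∈ sa3, a1' i ⊗ₜ[k] (a2' i ⊗ₜ[k] a3' i) →
    B.comul b = ∑ j ∈ sb, b1 j ⊗ₜ[k] b2 j →
    ∑ j ∈ sb, U a (b1 j) • B.antipode (b2 j) =
      ∑ i ∈ sa3, ∑ j ∈ sb,
        U (a2' i) (b2 j) • B.mul (B.antipode (B.mul (a1' i) (b1 j))) (a3' i) :=
  U_relation_one_general B sInv hsInv₁ qR hqR f g hgf hTwist U hU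
end
end

section
/- Let H be a dual quasi-bialgebra. Then the category of left-left Yetter-Drinfeld modules over H is isomorphic to the right weak center of the monoidal category of left H-comodules; for an object (M, c_{-,M}) of the weak center, the corresponding action is h·m = (id⊗ε)c_{H,M}(h⊗m), and conversely c_{N,M}(n⊗m) = n₍₋₁₎·m ⊗ n₍₀₎. -/
open TensorProduct

noncomputable section

namespace DQH

variable {k H : Type} [Field k] [AddCommGroup H] [Module k H]

/-- An object of the right weak center `W_r(ᴴM)` of the monoidal category of left
`H`-comodules, with underlying comodule `(M, cM)`: a natural family of `H`-colinear maps
`t_{N} : N ⊗ M → M ⊗ N` (for all left `H`-comodules `N`) with `t_I = id`, satisfying the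
weak-center hexagon condition (1.13) with respect to the associativity constraint of `ᴴM`. -/
structure RightCenterObj (B : DualQuasiBialgebra k H) (M : Type)
    [AddCommGroup M] [Module k M] (cM : M →ₗ[k] H ⊗[k] M) : Type 1 where
  t : ∀ (N : Type) [AddCommGroup N] [Module k N]
    (cN : N →ₗ[k] H ⊗[k] N), IsComodule B cN → (N ⊗[k] M →ₗ[k] M ⊗[k] N)
  natural : ∀ (N N' : Type) [AddCommGroup N] [Module k N] [AddCommGroup N'] [Module k N']
    (cN : N →ₗ[k] H ⊗[k] N) (cN' : N' →ₗ[k] H ⊗[k] N')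
    (hN : IsComodule B cN) (hN' : IsComodule B cN') (φ : N →ₗ[k] N'),
    cN' ∘ₗ φ = (TensorProduct.map LinearMap.id φ) ∘ₗ cN →
    (t N' cN' hN') ∘ₗ (TensorProduct.map φ LinearMap.id) =
      (TensorProduct.map LinearMap.id φ) ∘ₗ (t N cN hN)
  unit : ∀ (htriv : IsComodule B (TensorProduct.mk k H k B.one)) (m : M),
    t k (TensorProduct.mk k H k B.one) htriv ((1 : k) ⊗ₜ[k] m) = m ⊗ₜ[k] (1 : k)
  colinear : ∀ (N : Type) [AddCommGroup N] [Module k N]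
    (cN : N →ₗ[k] H ⊗[k] N) (hN : IsComodule B cN),
    (coactTensor B cM cN) ∘ₗ (t N cN hN) =
      (TensorProduct.map LinearMap.id (t N cN hN)) ∘ₗ (coactTensor B cN cM)
  hexagon : ∀ (X Y : Type) [AddCommGroup X] [Module k X] [AddCommGroup Y] [Module k Y]
    (cX : X →ₗ[k] H ⊗[k] X) (cY : Y →ₗ[k] H ⊗[k] Y)
    (hX : IsComodule B cX) (hY : IsComodule B cY)
    (hXY : IsComodule B (coactTensor B cX cY)),
    (assocInvMap B cM cX cY) ∘ₗ (t (X ⊗[k] Y) (coactTensor B cX cY) hXY) ∘ₗ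
        (assocInvMap B cX cY cM) =
      (TensorProduct.map (t X cX hX) LinearMap.id) ∘ₗ (assocInvMap B cX cM cY) ∘ₗ
        (TensorProduct.map LinearMap.id (t Y cY hY))

end DQH

/-!
A right weak-center structure `t` on a comodule `(M, ρ)` is determined by `t_H`: naturality of
`t` along the colinear maps `ρ_N : N → H ⊗ N` (into the cofree comodule) and `h ↦ h ⊗ n`
(out of `H`) forces `t_N(n ⊗ m) = n₍₋₁₎ · m ⊗ n₍₀₎` with `h · m = (id ⊗ ε) t_H(h ⊗ m)`.
For a braiding of this shape, colinearity at `n ⊗ m` and the hexagon at `x ⊗ y ⊗ m` expand,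
after coassociativity, to `Σ L(n₍₋₁₎ ⊗ m) ⊗ n₍₀₎ = Σ R(n₍₋₁₎ ⊗ m) ⊗ n₍₀₎` and
`Σ (L'(x₍₋₁₎ ⊗ y₍₋₁₎ ⊗ m) ⊗ x₍₀₎) ⊗ y₍₀₎ = Σ (R'(x₍₋₁₎ ⊗ y₍₋₁₎ ⊗ m) ⊗ x₍₀₎) ⊗ y₍₀₎`,
where `L = R` is (YD3) and `L' = R'` is (YD1). So the Yetter-Drinfeld axioms give a weak-center
object, and conversely, taking `N = X = Y = H` and applying the counit to the spare legs
recovers the axioms; `t_k = id` is `1 · m = m`.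
-/

theorem Multiset.exists_sum_map_eq_sum_range {T V : Type} [AddCommMonoid V] [Zero T]
    (S : Multiset T) (φ : T → V) :
    ∃ (s : Finset ℕ) (t : ℕ → T), (S.map φ).sum = ∑ i ∈ s, φ (t i) := by
  refine ⟨Finset.range S.toList.length, fun i => S.toList.getD i 0, ?_⟩
  rw [Finset.sum_range, ← Multiset.sum_map_toList, ← Fin.sum_univ_fun_getElem]
  exact Finset.sum_congr rfl fun i _ => by simp [List.getElem?_eq_getElem i.2]

namespace DQH

section Presentations

variable {k P Q R : Type} [CommSemiring k] [AddCommMonoid P] [Module k P]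
  [AddCommMonoid Q] [Module k Q] [AddCommMonoid R] [Module k R]

theorem exists_sum_tmul (x : P ⊗[k] Q) :
    ∃ (s : Finset ℕ) (f : ℕ → P) (g : ℕ → Q), x = ∑ i ∈ s, f i ⊗ₜ[k] g i := by
  obtain ⟨S, rfl⟩ := TensorProduct.exists_multiset x
  obtain ⟨s, t, h⟩ := S.exists_sum_map_eq_sum_range fun p => p.1 ⊗ₜ[k] p.2
  exact ⟨s, fun i => (t i).1, fun i => (t i).2, h⟩

theorem exists_sum_tmul_tmul (x : P ⊗[k] (Q ⊗[k] R)) :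
    ∃ (s : Finset ℕ) (f : ℕ → P) (g : ℕ → Q) (h : ℕ → R),
      x = ∑ i ∈ s, f i ⊗ₜ[k] (g i ⊗ₜ[k] h i) := by
  suffices ∃ S : Multiset (P × Q × R), x = (S.map fun p => p.1 ⊗ₜ[k] (p.2.1 ⊗ₜ[k] p.2.2)).sum by
    obtain ⟨S, rfl⟩ := this
    obtain ⟨s, t, h⟩ := S.exists_sum_map_eq_sum_range fun p => p.1 ⊗ₜ[k] (p.2.1 ⊗ₜ[k] p.2.2)
    exact ⟨s, fun i => (t i).1, fun i => (t i).2.1, fun i => (t i).2.2, h⟩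
  induction x using TensorProduct.induction_on with
  | zero => exact ⟨0, by simp⟩
  | add x y hx hy =>
    obtain ⟨S, rfl⟩ := hx
    obtain ⟨T, rfl⟩ := hy
    exact ⟨S + T, by simp⟩
  | tmul a y =>
    obtain ⟨T, rfl⟩ := TensorProduct.exists_multiset y
    refine ⟨T.map (a, ·), ?_⟩
    rw [← mk_apply, map_multiset_sum, Multiset.map_map, Multiset.map_map]
    rfl

end Presentations

section Legs

variable {k A A' U V N X Y : Type} [CommSemiring k] [AddCommMonoid A] [Module k A]
  [AddCommMonoid A'] [Module k A'] [AddCommMonoid U] [Module k U] [AddCommMonoid V] [Module k V]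
  [AddCommMonoid N] [Module k N] [AddCommMonoid X] [Module k X] [AddCommMonoid Y] [Module k Y]

variable (N) in
def withLeg (F : A ⊗[k] U →ₗ[k] V) : (A ⊗[k] N) ⊗[k] U →ₗ[k] V ⊗[k] N :=
  TensorProduct.map F LinearMap.id ∘ₗ (TensorProduct.rightComm k A N U).toLinearMap

@[simp] lemma withLeg_tmul (F : A ⊗[k] U →ₗ[k] V) (a : A) (n : N) (u : U) :
    withLeg N F ((a ⊗ₜ n) ⊗ₜ u) = F (a ⊗ₜ u) ⊗ₜ n := by
  simp [withLeg]

variable (X Y) in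
def withLegs (F : A ⊗[k] (A' ⊗[k] U) →ₗ[k] V) :
    (A ⊗[k] X) ⊗[k] ((A' ⊗[k] Y) ⊗[k] U) →ₗ[k] (V ⊗[k] X) ⊗[k] Y :=
  TensorProduct.map (withLeg X F) LinearMap.id ∘ₗ
    (TensorProduct.assoc k (A ⊗[k] X) (A' ⊗[k] U) Y).symm.toLinearMap ∘ₗ
    TensorProduct.map LinearMap.id (TensorProduct.rightComm k A' Y U).toLinearMap

@[simp] lemma withLegs_tmul (F : A ⊗[k] (A' ⊗[k] U) →ₗ[k] V) (a : A) (x : X) (a' : A') (y : Y)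
    (u : U) : withLegs X Y F ((a ⊗ₜ x) ⊗ₜ ((a' ⊗ₜ y) ⊗ₜ u)) = (F (a ⊗ₜ (a' ⊗ₜ u)) ⊗ₜ x) ⊗ₜ y := by
  simp [withLegs]

lemma withLeg_map_tmul {A₀ U₀ : Type} [AddCommMonoid A₀] [Module k A₀] [AddCommMonoid U₀]
    [Module k U₀] (F : A ⊗[k] U →ₗ[k] V) (f : A₀ →ₗ[k] A) (g : U₀ →ₗ[k] U) (w : A₀ ⊗[k] N)
    (u : U₀) :
    withLeg N F (TensorProduct.map f LinearMap.id w ⊗ₜ g u) =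
      withLeg N (F ∘ₗ TensorProduct.map f g) (w ⊗ₜ u) := by
  have : withLeg N F ∘ₗ TensorProduct.map (TensorProduct.map f LinearMap.id) g =
      withLeg N (F ∘ₗ TensorProduct.map f g) := by
    ext; simp
  simpa using LinearMap.congr_fun this (w ⊗ₜ u)

lemma withLegs_map_tmul {A₀ A₀' U₀ : Type} [AddCommMonoid A₀] [Module k A₀] [AddCommMonoid A₀']
    [Module k A₀'] [AddCommMonoid U₀] [Module k U₀] (F : A ⊗[k] (A' ⊗[k] U) →ₗ[k] V)
    (f : A₀ →ₗ[k] A) (f' : A₀' →ₗ[k] A') (g : U₀ →ₗ[k] U) (w : A₀ ⊗[k] X) (w' : A₀' ⊗[k] Y)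
    (u : U₀) :
    withLegs X Y F (TensorProduct.map f LinearMap.id w ⊗ₜ
        (TensorProduct.map f' LinearMap.id w' ⊗ₜ g u)) =
      withLegs X Y (F ∘ₗ TensorProduct.map f (TensorProduct.map f' g)) (w ⊗ₜ (w' ⊗ₜ u)) := by
  have : withLegs X Y F ∘ₗ TensorProduct.map (TensorProduct.map f LinearMap.id)
        (TensorProduct.map (TensorProduct.map f' LinearMap.id) g) =
      withLegs X Y (F ∘ₗ TensorProduct.map f (TensorProduct.map f' g)) := by
    ext; simp
  simpa using LinearMap.congr_fun this (w ⊗ₜ (w' ⊗ₜ u))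

end Legs

variable {k H : Type} [Field k] [AddCommGroup H] [Module k H] (B : DualQuasiBialgebra k H)
variable {M N X Y : Type} [AddCommGroup M] [Module k M] [AddCommGroup N] [Module k N]
  [AddCommGroup X] [Module k X] [AddCommGroup Y] [Module k Y]

section Counit

variable (N) in
def counitLeft : H ⊗[k] N →ₗ[k] N :=
  (TensorProduct.lid k N).toLinearMap ∘ₗ TensorProduct.map B.counit LinearMap.id

variable (N) in
def counitRight : N ⊗[k] H →ₗ[k] N :=
  (TensorProduct.rid k N).toLinearMap ∘ₗ TensorProduct.map LinearMap.id B.counit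

@[simp] lemma counitLeft_tmul (h : H) (n : N) : counitLeft B N (h ⊗ₜ n) = B.counit h • n := by
  simp [counitLeft]

@[simp] lemma counitRight_tmul (n : N) (h : H) : counitRight B N (n ⊗ₜ h) = B.counit h • n := by
  simp [counitRight]

variable {B} in
lemma IsComodule.counitLeft_coact {cN : N →ₗ[k] H ⊗[k] N} (hN : IsComodule B cN) (n : N) :
    counitLeft B N (cN n) = n :=
  hN.2 n

lemma counitRight_comul (h : H) : counitRight B H (B.comul h) = h :=
  B.counit_right h

theorem isComodule_comul : IsComodule B B.comul :=
  ⟨B.coassoc, B.counit_left⟩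

lemma counitRight_withLeg {A U V : Type} [AddCommGroup A] [Module k A] [AddCommGroup U]
    [Module k U] [AddCommGroup V] [Module k V] (F : A ⊗[k] U →ₗ[k] V) (w : A ⊗[k] H) (u : U) :
    counitRight B V (withLeg H F (w ⊗ₜ u)) = F (counitRight B A w ⊗ₜ u) := by
  have : counitRight B V ∘ₗ withLeg H F =
      F ∘ₗ TensorProduct.map (counitRight B A) LinearMap.id := by
    ext; simp [← smul_tmul']
  simpa using LinearMap.congr_fun this (w ⊗ₜ u)

lemma counitRight_withLegs {A A' U V : Type} [AddCommGroup A] [Module k A] [AddCommGroup A']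
    [Module k A'] [AddCommGroup U] [Module k U] [AddCommGroup V] [Module k V]
    (F : A ⊗[k] (A' ⊗[k] U) →ₗ[k] V) (w : A ⊗[k] H) (w' : A' ⊗[k] H) (u : U) :
    counitRight B V (counitRight B (V ⊗[k] H) (withLegs H H F (w ⊗ₜ (w' ⊗ₜ u)))) =
      F (counitRight B A w ⊗ₜ (counitRight B A' w' ⊗ₜ u)) := by
  have : counitRight B V ∘ₗ counitRight B (V ⊗[k] H) ∘ₗ withLegs H H F =
      F ∘ₗ TensorProduct.map (counitRight B A)
        (TensorProduct.map (counitRight B A') LinearMap.id) := by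
    ext; simp [← smul_tmul', tmul_smul, smul_smul]
  simpa using LinearMap.congr_fun this (w ⊗ₜ (w' ⊗ₜ u))

end Counit

theorem ydBraiding_tmul_eq_sum {ι : Type} (act : H →ₗ[k] M →ₗ[k] M) (cN : N →ₗ[k] H ⊗[k] N)
    (n : N) (m : M) (s : Finset ι) (n1 : ι → H) (n0 : ι → N)
    (hn : cN n = ∑ i ∈ s, n1 i ⊗ₜ[k] n0 i) :
    ydBraiding act cN (n ⊗ₜ[k] m) = ∑ i ∈ s, act (n1 i) m ⊗ₜ[k] n0 i := by
  simp [ydBraiding, hn, sum_tmul]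

section Comodules

variable (N) in
def cofreeCoact : H ⊗[k] N →ₗ[k] H ⊗[k] (H ⊗[k] N) :=
  (TensorProduct.assoc k H H N).toLinearMap ∘ₗ TensorProduct.map B.comul LinearMap.id

lemma cofreeCoact_tmul (h : H) (n : N) :
    cofreeCoact B N (h ⊗ₜ n) =
      TensorProduct.map LinearMap.id ((TensorProduct.mk k H N).flip n) (B.comul h) := by
  simp only [cofreeCoact, LinearMap.comp_apply, map_tmul, LinearMap.id_coe, id_eq,
    LinearEquiv.coe_coe]
  induction B.comul h using TensorProduct.induction_on with
  | zero => simp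
  | add u v hu hv => simp only [add_tmul, map_add, hu, hv]
  | tmul a b => simp

theorem isComodule_cofreeCoact : IsComodule B (cofreeCoact B N) := by
  constructor
  · intro w
    induction w using TensorProduct.induction_on with
    | zero => simp
    | add u v hu hv => simp only [map_add, hu, hv]
    | tmul h n =>
      rw [cofreeCoact_tmul]
      convert congrArg (TensorProduct.map LinearMap.id
        (TensorProduct.map LinearMap.id ((TensorProduct.mk k H N).flip n))) (B.coassoc h) using 1
      · induction B.comul h using TensorProduct.induction_on with
        | zero => simp
        | add u v hu hv => simp only [map_add, hu, hv]
        | tmul a b =>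
          simp only [map_tmul, LinearMap.id_coe, id_eq, LinearMap.flip_apply, mk_apply]
          induction B.comul a using TensorProduct.induction_on with
          | zero => simp
          | add u v hu hv => simp only [add_tmul, map_add, hu, hv]
          | tmul c d => simp
      · induction B.comul h using TensorProduct.induction_on with
        | zero => simp
        | add u v hu hv => simp only [map_add, hu, hv]
        | tmul a b => simp [cofreeCoact_tmul]
  · intro w
    induction w using TensorProduct.induction_on with
    | zero => simp
    | add u v hu hv => simp only [map_add, hu, hv]
    | tmul h n =>
      conv_rhs => rw [← B.counit_left h]
      rw [cofreeCoact_tmul]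
      induction B.comul h using TensorProduct.induction_on with
      | zero => simp
      | add u v hu hv => simp only [map_add, add_tmul, hu, hv]
      | tmul a b => simp [smul_tmul']

def mulPair : (H ⊗[k] H) ⊗[k] (H ⊗[k] H) →ₗ[k] H ⊗[k] H :=
  TensorProduct.map (TensorProduct.lift B.mul) (TensorProduct.lift B.mul) ∘ₗ
    (TensorProduct.tensorTensorTensorComm k H H H H).toLinearMap

lemma comul_mul_eq (a b : H) : B.comul (B.mul a b) = mulPair B (B.comul a ⊗ₜ B.comul b) := by
  obtain ⟨sa, a1, a2, ha⟩ := exists_sum_tmul (B.comul a)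
  obtain ⟨sb, b1, b2, hb⟩ := exists_sum_tmul (B.comul b)
  simp only [B.comul_mul a b sa sb a1 a2 b1 b2 ha hb, ha, hb, mulPair, LinearMap.comp_apply,
    sum_tmul, tmul_sum, map_sum, LinearEquiv.coe_coe, tensorTensorTensorComm_tmul, map_tmul,
    lift.tmul]
  exact Finset.sum_comm

variable (X Y) in
def diagonal₂ :
    (H ⊗[k] (H ⊗[k] X)) ⊗[k] (H ⊗[k] (H ⊗[k] Y)) →ₗ[k] H ⊗[k] (H ⊗[k] (X ⊗[k] Y)) :=
  TensorProduct.map LinearMap.id (TensorProduct.map (TensorProduct.lift B.mul) LinearMap.id) ∘ₗ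
    TensorProduct.map (TensorProduct.lift B.mul)
      (TensorProduct.tensorTensorTensorComm k H X H Y).toLinearMap ∘ₗ
    (TensorProduct.tensorTensorTensorComm k H (H ⊗[k] X) H (H ⊗[k] Y)).toLinearMap

@[simp] lemma diagonal₂_tmul (a b c d : H) (x : X) (y : Y) :
    diagonal₂ B X Y ((a ⊗ₜ (b ⊗ₜ x)) ⊗ₜ (c ⊗ₜ (d ⊗ₜ y))) =
      B.mul a c ⊗ₜ (B.mul b d ⊗ₜ (x ⊗ₜ y)) := by
  simp [diagonal₂]

variable (cX : X →ₗ[k] H ⊗[k] X) (cY : Y →ₗ[k] H ⊗[k] Y)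

lemma assoc_map_comul_coactTensor_tmul (x : X) (y : Y) :
    TensorProduct.assoc k H H (X ⊗[k] Y)
        (TensorProduct.map B.comul LinearMap.id (coactTensor B cX cY (x ⊗ₜ y))) =
      diagonal₂ B X Y
        (TensorProduct.assoc k H H X (TensorProduct.map B.comul LinearMap.id (cX x)) ⊗ₜ
          TensorProduct.assoc k H H Y (TensorProduct.map B.comul LinearMap.id (cY y))) := by
  simp only [coactTensor, LinearMap.comp_apply, map_tmul]
  induction cX x using TensorProduct.induction_on with
  | zero => simp
  | add u v hu hv => simp only [map_add, add_tmul, hu, hv]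
  | tmul a x0 =>
    induction cY y using TensorProduct.induction_on with
    | zero => simp
    | add u v hu hv => simp only [map_add, tmul_add, hu, hv]
    | tmul b y0 =>
      simp only [LinearEquiv.coe_coe, tensorTensorTensorComm_tmul, map_tmul, lift.tmul,
        LinearMap.id_coe, id_eq, comul_mul_eq, mulPair]
      induction B.comul a using TensorProduct.induction_on with
      | zero => simp
      | add u v hu hv => simp only [map_add, add_tmul, hu, hv]
      | tmul a1 a2 =>
        induction B.comul b using TensorProduct.induction_on with
        | zero => simp
        | add u v hu hv => simp only [map_add, add_tmul, tmul_add, hu, hv]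
        | tmul b1 b2 => simp

lemma map_coactTensor_coactTensor_tmul (x : X) (y : Y) :
    TensorProduct.map LinearMap.id (coactTensor B cX cY) (coactTensor B cX cY (x ⊗ₜ y)) =
      diagonal₂ B X Y (TensorProduct.map LinearMap.id cX (cX x) ⊗ₜ
        TensorProduct.map LinearMap.id cY (cY y)) := by
  simp only [coactTensor, LinearMap.comp_apply, map_tmul]
  induction cX x using TensorProduct.induction_on with
  | zero => simp
  | add u v hu hv => simp only [map_add, add_tmul, hu, hv]
  | tmul a x0 =>
    induction cY y using TensorProduct.induction_on with
    | zero => simp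
    | add u v hu hv => simp only [map_add, tmul_add, hu, hv]
    | tmul b y0 =>
      simp only [LinearEquiv.coe_coe, tensorTensorTensorComm_tmul, map_tmul, lift.tmul,
        LinearMap.id_coe, id_eq, LinearMap.comp_apply]
      induction cX x0 using TensorProduct.induction_on with
      | zero => simp
      | add u v hu hv => simp only [map_add, add_tmul, tmul_add, hu, hv]
      | tmul a1 x1 =>
        induction cY y0 using TensorProduct.induction_on with
        | zero => simp
        | add u v hu hv => simp only [map_add, tmul_add, hu, hv]
        | tmul b1 y1 => simp

lemma counitLeft_coactTensor_tmul (x : X) (y : Y) :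
    counitLeft B (X ⊗[k] Y) (coactTensor B cX cY (x ⊗ₜ y)) =
      counitLeft B X (cX x) ⊗ₜ counitLeft B Y (cY y) := by
  simp only [coactTensor, LinearMap.comp_apply, map_tmul]
  induction cX x using TensorProduct.induction_on with
  | zero => simp
  | add u v hu hv => simp only [map_add, add_tmul, hu, hv]
  | tmul a x0 =>
    induction cY y using TensorProduct.induction_on with
    | zero => simp
    | add u v hu hv => simp only [map_add, tmul_add, hu, hv]
    | tmul b y0 => simp [B.counit_mul, smul_tmul', smul_smul, mul_comm]

variable {cX cY} in
theorem isComodule_coactTensor (hX : IsComodule B cX) (hY : IsComodule B cY) :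
    IsComodule B (coactTensor B cX cY) := by
  constructor
  · intro w
    induction w using TensorProduct.induction_on with
    | zero => simp
    | add u v hu hv => simp only [map_add, hu, hv]
    | tmul x y =>
      rw [assoc_map_comul_coactTensor_tmul, map_coactTensor_coactTensor_tmul, hX.1, hY.1]
  · intro w
    induction w using TensorProduct.induction_on with
    | zero => simp
    | add u v hu hv => simp only [map_add, hu, hv]
    | tmul x y =>
      exact (counitLeft_coactTensor_tmul B cX cY x y).trans
        (by rw [hX.counitLeft_coact, hY.counitLeft_coact])

end Comodules

section YetterDrinfeldForms

variable (cM : M →ₗ[k] H ⊗[k] M) (act : H →ₗ[k] M →ₗ[k] M)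

def comul3 : H →ₗ[k] H ⊗[k] (H ⊗[k] H) :=
  TensorProduct.map LinearMap.id B.comul ∘ₗ B.comul

lemma comul3_apply (h : H) : comul3 B h = cD3 B.comul h := rfl

def sigmaCoactLeft : (H ⊗[k] H) ⊗[k] M →ₗ[k] M :=
  (TensorProduct.lid k M).toLinearMap ∘ₗ
    TensorProduct.map (sigma3R B ∘ₗ (TensorProduct.comm k (H ⊗[k] H) H).toLinearMap)
      LinearMap.id ∘ₗ
    (TensorProduct.assoc k (H ⊗[k] H) H M).symm.toLinearMap ∘ₗ TensorProduct.map LinearMap.id cM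

def sigmaCoactMid : (H ⊗[k] H) ⊗[k] M →ₗ[k] M :=
  (TensorProduct.lid k M).toLinearMap ∘ₗ
    TensorProduct.map (sigma3R B ∘ₗ TensorProduct.map LinearMap.id
        (TensorProduct.comm k H H).toLinearMap ∘ₗ (TensorProduct.assoc k H H H).toLinearMap)
      LinearMap.id ∘ₗ
    (TensorProduct.assoc k (H ⊗[k] H) H M).symm.toLinearMap ∘ₗ TensorProduct.map LinearMap.id cM

@[simp] lemma sigmaCoactLeft_tmul (a b : H) (v : M) :
    sigmaCoactLeft B cM ((a ⊗ₜ b) ⊗ₜ v) = cweight cM ((B.sigma.flip a).flip b) v := by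
  simp only [sigmaCoactLeft, cweight, LinearMap.comp_apply, map_tmul,
    LinearMap.id_coe, id_eq]
  induction cM v using TensorProduct.induction_on with
  | zero => simp
  | add u w hu hw => simp only [map_add, tmul_add, hu, hw]
  | tmul c v0 => simp [sigma3R, sigma3]

@[simp] lemma sigmaCoactMid_tmul (a b : H) (v : M) :
    sigmaCoactMid B cM ((a ⊗ₜ b) ⊗ₜ v) = cweight cM ((B.sigma a).flip b) v := by
  simp only [sigmaCoactMid, cweight, LinearMap.comp_apply, map_tmul,
    LinearMap.id_coe, id_eq]
  induction cM v using TensorProduct.induction_on with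
  | zero => simp
  | add u w hu hw => simp only [map_add, tmul_add, hu, hw]
  | tmul c v0 => simp [sigma3R, sigma3]

def yd1Shuffle : (H ⊗[k] (H ⊗[k] H)) ⊗[k] ((H ⊗[k] (H ⊗[k] H)) ⊗[k] (H ⊗[k] M))
    ≃ₗ[k] (H ⊗[k] (H ⊗[k] H)) ⊗[k] ((H ⊗[k] H) ⊗[k] ((H ⊗[k] H) ⊗[k] M)) :=
  TensorProduct.congr (LinearEquiv.refl k _)
      (TensorProduct.tensorTensorTensorComm k H (H ⊗[k] H) H M) ≪≫ₗ
    TensorProduct.tensorTensorTensorComm k H (H ⊗[k] H) (H ⊗[k] H) ((H ⊗[k] H) ⊗[k] M) ≪≫ₗ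
    TensorProduct.congr (LinearEquiv.refl k _)
      ((TensorProduct.assoc k (H ⊗[k] H) (H ⊗[k] H) M).symm ≪≫ₗ
        TensorProduct.congr (TensorProduct.tensorTensorTensorComm k H H H H ≪≫ₗ
          TensorProduct.comm k (H ⊗[k] H) (H ⊗[k] H)) (LinearEquiv.refl k M) ≪≫ₗ
        TensorProduct.assoc k (H ⊗[k] H) (H ⊗[k] H) M)

def yd1LeftCore :
    (H ⊗[k] (H ⊗[k] H)) ⊗[k] ((H ⊗[k] (H ⊗[k] H)) ⊗[k] (H ⊗[k] M)) →ₗ[k] M :=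
  (TensorProduct.lid k M).toLinearMap ∘ₗ
    TensorProduct.map (sigma3R B) (sigmaCoactLeft B cM ∘ₗ
      TensorProduct.map LinearMap.id (TensorProduct.lift (act ∘ₗ TensorProduct.lift B.mul))) ∘ₗ
    (yd1Shuffle (k := k) (H := H) (M := M)).toLinearMap

@[simp] lemma yd1LeftCore_tmul (h1 h2 h3 g1 g2 g3 m1 : H) (m0 : M) :
    yd1LeftCore B cM act
        ((h1 ⊗ₜ (h2 ⊗ₜ h3)) ⊗ₜ ((g1 ⊗ₜ (g2 ⊗ₜ g3)) ⊗ₜ (m1 ⊗ₜ m0))) =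
      B.sigma h1 g1 m1 • cweight cM ((B.sigma.flip h3).flip g3) (act (B.mul h2 g2) m0) := by
  simp [yd1LeftCore, yd1Shuffle, sigma3R, sigma3]

def yd1RightCore : (H ⊗[k] H) ⊗[k] ((H ⊗[k] H) ⊗[k] M) →ₗ[k] M :=
  TensorProduct.lift act ∘ₗ (TensorProduct.comm k M H).toLinearMap ∘ₗ
    TensorProduct.map (sigmaCoactMid B cM) LinearMap.id ∘ₗ
    (TensorProduct.assoc k (H ⊗[k] H) M H).symm.toLinearMap ∘ₗ
    TensorProduct.map LinearMap.id (TensorProduct.comm k H M).toLinearMap ∘ₗ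
    (TensorProduct.tensorTensorTensorComm k H H H M).toLinearMap ∘ₗ
    TensorProduct.map LinearMap.id
      (TensorProduct.map LinearMap.id (TensorProduct.lift act) ∘ₗ
        (TensorProduct.assoc k H H M).toLinearMap ∘ₗ
        TensorProduct.map (TensorProduct.comm k H H).toLinearMap LinearMap.id)

@[simp] lemma yd1RightCore_tmul (h1 h2 g1 g2 : H) (m : M) :
    yd1RightCore B cM act ((h1 ⊗ₜ h2) ⊗ₜ ((g1 ⊗ₜ g2) ⊗ₜ m)) =
      act h2 (cweight cM ((B.sigma h1).flip g2) (act g1 m)) := by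
  simp [yd1RightCore]

def yd1Left : H ⊗[k] (H ⊗[k] M) →ₗ[k] M :=
  yd1LeftCore B cM act ∘ₗ TensorProduct.map (comul3 B) (TensorProduct.map (comul3 B) cM)

def yd1Right : H ⊗[k] (H ⊗[k] M) →ₗ[k] M :=
  yd1RightCore B cM act ∘ₗ TensorProduct.map B.comul (TensorProduct.map B.comul LinearMap.id)

lemma yd1Left_tmul_eq_sum (h g : H) (m : M) (sh sg sm : Finset ℕ)
    (h1 h2 h3 g1 g2 g3 m1 : ℕ → H) (m0 : ℕ → M)
    (hh : cD3 B.comul h = ∑ i ∈ sh, h1 i ⊗ₜ[k] (h2 i ⊗ₜ[k] h3 i))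
    (hg : cD3 B.comul g = ∑ j ∈ sg, g1 j ⊗ₜ[k] (g2 j ⊗ₜ[k] g3 j))
    (hm : cM m = ∑ r ∈ sm, m1 r ⊗ₜ[k] m0 r) :
    yd1Left B cM act (h ⊗ₜ (g ⊗ₜ m)) =
      ∑ i ∈ sh, ∑ j ∈ sg, ∑ r ∈ sm, B.sigma (h1 i) (g1 j) (m1 r) •
        cweight cM ((B.sigma.flip (h3 i)).flip (g3 j)) (act (B.mul (h2 i) (g2 j)) (m0 r)) := by
  simp only [yd1Left, LinearMap.comp_apply, map_tmul, comul3_apply, hh, hg, hm, tmul_sum,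
    sum_tmul, map_sum, yd1LeftCore_tmul]
  simp_rw [Finset.sum_comm (s := sm), Finset.sum_comm (s := sg)]

lemma yd1Right_tmul_eq_sum (h g : H) (m : M) (sh sg : Finset ℕ) (h1 h2 g1 g2 : ℕ → H)
    (hh : B.comul h = ∑ i ∈ sh, h1 i ⊗ₜ[k] h2 i) (hg : B.comul g = ∑ j ∈ sg, g1 j ⊗ₜ[k] g2 j) :
    yd1Right B cM act (h ⊗ₜ (g ⊗ₜ m)) =
      ∑ i ∈ sh, ∑ j ∈ sg,
        act (h2 i) (cweight cM ((B.sigma (h1 i)).flip (g2 j)) (act (g1 j) m)) := by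
  simp only [yd1Right, LinearMap.comp_apply, map_tmul, hh, hg, LinearMap.id_coe, id_eq, sum_tmul,
    tmul_sum, map_sum, yd1RightCore_tmul]
  exact Finset.sum_comm

def yd3LeftCore : (H ⊗[k] H) ⊗[k] (H ⊗[k] M) →ₗ[k] H ⊗[k] M :=
  TensorProduct.map (TensorProduct.lift B.mul) (TensorProduct.lift act) ∘ₗ
    (TensorProduct.tensorTensorTensorComm k H H H M).toLinearMap

@[simp] lemma yd3LeftCore_tmul (h1 h2 m1 : H) (m0 : M) :
    yd3LeftCore B act ((h1 ⊗ₜ h2) ⊗ₜ (m1 ⊗ₜ m0)) = B.mul h1 m1 ⊗ₜ act h2 m0 := by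
  simp [yd3LeftCore]

def yd3RightCore : (H ⊗[k] H) ⊗[k] M →ₗ[k] H ⊗[k] M :=
  TensorProduct.map (TensorProduct.lift B.mul) LinearMap.id ∘ₗ
    (TensorProduct.rightComm k H M H).toLinearMap ∘ₗ
    TensorProduct.map (cM ∘ₗ TensorProduct.lift act) LinearMap.id ∘ₗ
    (TensorProduct.rightComm k H H M).toLinearMap

@[simp] lemma yd3RightCore_tmul (h1 h2 : H) (m : M) :
    yd3RightCore B cM act ((h1 ⊗ₜ h2) ⊗ₜ m) =
      TensorProduct.map (B.mul.flip h2) LinearMap.id (cM (act h1 m)) := by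
  simp only [yd3RightCore, LinearMap.comp_apply, LinearEquiv.coe_coe,
    rightComm_tmul, map_tmul, lift.tmul,
    LinearMap.id_coe, id_eq]
  induction cM (act h1 m) using TensorProduct.induction_on with
  | zero => simp
  | add u w hu hw => simp only [map_add, add_tmul, hu, hw]
  | tmul a v => simp

def yd3Left : H ⊗[k] M →ₗ[k] H ⊗[k] M :=
  yd3LeftCore B act ∘ₗ TensorProduct.map B.comul cM

def yd3Right : H ⊗[k] M →ₗ[k] H ⊗[k] M :=
  yd3RightCore B cM act ∘ₗ TensorProduct.map B.comul LinearMap.id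

lemma yd3Left_tmul_eq_sum (h : H) (m : M) (sh sm : Finset ℕ) (h1 h2 m1 : ℕ → H) (m0 : ℕ → M)
    (hh : B.comul h = ∑ i ∈ sh, h1 i ⊗ₜ[k] h2 i) (hm : cM m = ∑ j ∈ sm, m1 j ⊗ₜ[k] m0 j) :
    yd3Left B cM act (h ⊗ₜ m) =
      ∑ i ∈ sh, ∑ j ∈ sm, B.mul (h1 i) (m1 j) ⊗ₜ[k] act (h2 i) (m0 j) := by
  simp only [yd3Left, LinearMap.comp_apply, map_tmul, hh, hm, tmul_sum, sum_tmul, map_sum,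
    yd3LeftCore_tmul]
  exact Finset.sum_comm

lemma yd3Right_tmul_eq_sum (h : H) (m : M) (sh : Finset ℕ) (h1 h2 : ℕ → H)
    (hh : B.comul h = ∑ i ∈ sh, h1 i ⊗ₜ[k] h2 i) :
    yd3Right B cM act (h ⊗ₜ m) =
      ∑ i ∈ sh, TensorProduct.map (B.mul.flip (h2 i)) LinearMap.id (cM (act (h1 i) m)) := by
  simp [yd3Right, hh, sum_tmul]

theorem isYetterDrinfeld_iff : IsYetterDrinfeld B cM act ↔
    IsComodule B cM ∧ (∀ m, act B.one m = m) ∧ yd1Left B cM act = yd1Right B cM act ∧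
      yd3Left B cM act = yd3Right B cM act := by
  constructor
  · intro hYD
    refine ⟨hYD.comodule, hYD.one_act, ?_, ?_⟩
    · refine TensorProduct.ext_threefold' fun h g m => ?_
      obtain ⟨sh3, h1, h2, h3, hh3⟩ := exists_sum_tmul_tmul (cD3 B.comul h)
      obtain ⟨sg3, g1, g2, g3, hg3⟩ := exists_sum_tmul_tmul (cD3 B.comul g)
      obtain ⟨sh, h1', h2', hh⟩ := exists_sum_tmul (B.comul h)
      obtain ⟨sg, g1', g2', hg⟩ := exists_sum_tmul (B.comul g)
      obtain ⟨sm, m1, m0, hm⟩ := exists_sum_tmul (cM m)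
      rw [yd1Left_tmul_eq_sum B cM act h g m sh3 sg3 sm h1 h2 h3 g1 g2 g3 m1 m0 hh3 hg3 hm,
        yd1Right_tmul_eq_sum B cM act h g m sh sg h1' h2' g1' g2' hh hg]
      exact hYD.yd1 h g m sh3 sg3 sh sg sm h1 h2 h3 g1 g2 g3 h1' h2' g1' g2' m1 m0 hh3 hg3 hh hg hm
    · refine TensorProduct.ext' fun h m => ?_
      obtain ⟨sh, h1, h2, hh⟩ := exists_sum_tmul (B.comul h)
      obtain ⟨sm, m1, m0, hm⟩ := exists_sum_tmul (cM m)
      rw [yd3Left_tmul_eq_sum B cM act h m sh sm h1 h2 m1 m0 hh hm,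
        yd3Right_tmul_eq_sum B cM act h m sh h1 h2 hh]
      exact hYD.yd3 h m sh sm h1 h2 m1 m0 hh hm
  · rintro ⟨hcM, hone, hyd1, hyd3⟩
    exact
      { comodule := hcM
        one_act := hone
        yd1 := fun h g m sh3 sg3 sh sg sm h1 h2 h3 g1 g2 g3 h1' h2' g1' g2' m1 m0
            hh3 hg3 hh hg hm => by
          rw [← yd1Left_tmul_eq_sum B cM act h g m sh3 sg3 sm h1 h2 h3 g1 g2 g3 m1 m0 hh3 hg3 hm,
            ← yd1Right_tmul_eq_sum B cM act h g m sh sg h1' h2' g1' g2' hh hg, hyd1]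
        yd3 := fun h m sh sm h1 h2 m1 m0 hh hm => by
          rw [← yd3Left_tmul_eq_sum B cM act h m sh sm h1 h2 m1 m0 hh hm,
            ← yd3Right_tmul_eq_sum B cM act h m sh h1 h2 hh, hyd3] }

end YetterDrinfeldForms

section IteratedCoaction

variable (cX : X →ₗ[k] H ⊗[k] X)

def coact2 : X →ₗ[k] (H ⊗[k] H) ⊗[k] X :=
  (TensorProduct.assoc k H H X).symm.toLinearMap ∘ₗ TensorProduct.map LinearMap.id cX ∘ₗ cX

def coact3 : X →ₗ[k] (H ⊗[k] (H ⊗[k] H)) ⊗[k] X :=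
  (TensorProduct.assoc k H (H ⊗[k] H) X).symm.toLinearMap ∘ₗ
    TensorProduct.map LinearMap.id (coact2 cX) ∘ₗ cX

variable {B cX}

lemma IsComodule.coact2_eq (hX : IsComodule B cX) :
    coact2 cX = TensorProduct.map B.comul LinearMap.id ∘ₗ cX := by
  ext x
  simp [coact2, ← hX.1 x]

lemma IsComodule.coact3_eq (hX : IsComodule B cX) :
    coact3 cX = TensorProduct.map (comul3 B) LinearMap.id ∘ₗ cX := by
  ext x
  simp only [coact3, hX.coact2_eq, LinearMap.comp_apply, LinearEquiv.coe_coe]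
  rw [← LinearMap.map_lTensor, LinearMap.lTensor, ← hX.1 x]
  induction cX x using TensorProduct.induction_on with
  | zero => simp
  | add u v hu hv => simp only [map_add, hu, hv]
  | tmul a x0 =>
    simp only [map_tmul, comul3, LinearMap.comp_apply, LinearMap.id_coe, id_eq]
    induction B.comul a using TensorProduct.induction_on with
    | zero => simp
    | add u v hu hv => simp only [map_add, add_tmul, hu, hv]
    | tmul b c =>
      simp only [assoc_tmul, map_tmul, LinearMap.id_coe, id_eq]
      induction B.comul c using TensorProduct.induction_on with
      | zero => simp
      | add u v hu hv => simp only [map_add, add_tmul, tmul_add, hu, hv]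
      | tmul d e => simp

end IteratedCoaction

section Colinearity

variable (cM : M →ₗ[k] H ⊗[k] M) (act : H →ₗ[k] M →ₗ[k] M) (cN : N →ₗ[k] H ⊗[k] N)

lemma coactTensor_ydBraiding_tmul_eq_coact2 (n : N) (m : M) :
    coactTensor B cM cN (ydBraiding act cN (n ⊗ₜ m)) =
      TensorProduct.assoc k H M N (withLeg N (yd3RightCore B cM act) (coact2 cN n ⊗ₜ m)) := by
  simp only [coactTensor, ydBraiding, coact2, LinearMap.comp_apply, LinearEquiv.coe_coe,
    map_tmul, LinearMap.id_coe, id_eq]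
  induction cN n using TensorProduct.induction_on with
  | zero => simp
  | add u v hu hv => simp only [map_add, add_tmul, hu, hv]
  | tmul a n0 =>
    simp only [assoc_tmul, map_tmul, LinearMap.id_coe, id_eq, LinearEquiv.coe_coe, comm_tmul,
      assoc_symm_tmul, lift.tmul]
    induction cN n0 using TensorProduct.induction_on with
    | zero => simp
    | add u v hu hv => simp only [map_add, add_tmul, tmul_add, hu, hv]
    | tmul b n1 =>
      simp only [assoc_symm_tmul, withLeg_tmul, yd3RightCore_tmul]
      induction cM (act a m) using TensorProduct.induction_on with
      | zero => simp
      | add u v hu hv => simp only [map_add, add_tmul, hu, hv]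
      | tmul c v => simp

lemma map_ydBraiding_coactTensor_tmul_eq_coact2 (n : N) (m : M) :
    TensorProduct.map LinearMap.id (ydBraiding act cN) (coactTensor B cN cM (n ⊗ₜ m)) =
      TensorProduct.assoc k H M N (withLeg N (yd3LeftCore B act) (coact2 cN n ⊗ₜ cM m)) := by
  simp only [coactTensor, ydBraiding, coact2, LinearMap.comp_apply, LinearEquiv.coe_coe,
    map_tmul]
  induction cN n using TensorProduct.induction_on with
  | zero => simp
  | add u v hu hv => simp only [map_add, add_tmul, hu, hv]
  | tmul a n0 =>
    simp only [map_tmul, LinearMap.id_coe, id_eq]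
    induction cM m using TensorProduct.induction_on with
    | zero => simp
    | add u v hu hv => simp only [map_add, tmul_add, hu, hv]
    | tmul c v =>
      simp only [tensorTensorTensorComm_tmul, map_tmul, lift.tmul, LinearMap.id_coe, id_eq,
        LinearMap.comp_apply, LinearEquiv.coe_coe]
      induction cN n0 using TensorProduct.induction_on with
      | zero => simp
      | add u v hu hv => simp only [map_add, add_tmul, tmul_add, hu, hv]
      | tmul b n1 => simp

variable {cN}

theorem coactTensor_ydBraiding_tmul (hN : IsComodule B cN) (n : N) (m : M) :
    coactTensor B cM cN (ydBraiding act cN (n ⊗ₜ m)) =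
      TensorProduct.assoc k H M N (withLeg N (yd3Right B cM act) (cN n ⊗ₜ m)) := by
  rw [coactTensor_ydBraiding_tmul_eq_coact2, hN.coact2_eq, LinearMap.comp_apply]
  exact congrArg _ (withLeg_map_tmul (yd3RightCore B cM act) B.comul LinearMap.id (cN n) m)

theorem map_ydBraiding_coactTensor_tmul (hN : IsComodule B cN) (n : N) (m : M) :
    TensorProduct.map LinearMap.id (ydBraiding act cN) (coactTensor B cN cM (n ⊗ₜ m)) =
      TensorProduct.assoc k H M N (withLeg N (yd3Left B cM act) (cN n ⊗ₜ m)) := by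
  rw [map_ydBraiding_coactTensor_tmul_eq_coact2, hN.coact2_eq, LinearMap.comp_apply,
    withLeg_map_tmul]
  rfl

theorem ydBraiding_colinear (hyd3 : yd3Left B cM act = yd3Right B cM act)
    (hN : IsComodule B cN) :
    coactTensor B cM cN ∘ₗ ydBraiding act cN =
      TensorProduct.map LinearMap.id (ydBraiding act cN) ∘ₗ coactTensor B cN cM :=
  TensorProduct.ext' fun n m => by
    simp only [LinearMap.comp_apply, coactTensor_ydBraiding_tmul B cM act hN,
      map_ydBraiding_coactTensor_tmul B cM act hN, hyd3]

theorem yd3Left_eq_of_colinear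
    (hcol : coactTensor B cM B.comul ∘ₗ ydBraiding act B.comul =
      TensorProduct.map LinearMap.id (ydBraiding act B.comul) ∘ₗ coactTensor B B.comul cM) :
    yd3Left B cM act = yd3Right B cM act :=
  TensorProduct.ext' fun h m => by
    have := congrArg (fun w => counitRight B (H ⊗[k] M) ((TensorProduct.assoc k H M H).symm w))
      (LinearMap.congr_fun hcol (h ⊗ₜ m))
    simpa [coactTensor_ydBraiding_tmul B cM act (isComodule_comul B),
      map_ydBraiding_coactTensor_tmul B cM act (isComodule_comul B), counitRight_withLeg,
      counitRight_comul] using this.symm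

end Colinearity

section Hexagon

variable (cM : M →ₗ[k] H ⊗[k] M) (act : H →ₗ[k] M →ₗ[k] M)
  (cX : X →ₗ[k] H ⊗[k] X) (cY : Y →ₗ[k] H ⊗[k] Y)

lemma sigma_smul_assocInvMap_ydBraiding_tmul (a b c : H) (x : X) (y : Y) (m : M) :
    B.sigma a b c • assocInvMap B cM cX cY (ydBraiding act (coactTensor B cX cY) ((x ⊗ₜ y) ⊗ₜ m)) =
      withLegs X Y (yd1LeftCore B cM act)
        ((TensorProduct.assoc k H (H ⊗[k] H) X).symm (a ⊗ₜ coact2 cX x) ⊗ₜ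
          ((TensorProduct.assoc k H (H ⊗[k] H) Y).symm (b ⊗ₜ coact2 cY y) ⊗ₜ (c ⊗ₜ m))) := by
  simp only [assocInvMap, ydBraiding, coactTensor, coact2, LinearMap.comp_apply,
    LinearEquiv.coe_coe, map_tmul, LinearMap.id_coe, id_eq]
  induction cX x using TensorProduct.induction_on with
  | zero => simp
  | add u v hu hv => simp only [map_add, add_tmul, tmul_add, smul_add, hu, hv]
  | tmul x1 x0 =>
    induction cY y using TensorProduct.induction_on with
    | zero => simp
    | add u v hu hv => simp only [map_add, add_tmul, tmul_add, smul_add, hu, hv]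
    | tmul y1 y0 =>
      simp only [tensorTensorTensorComm_tmul, map_tmul, lift.tmul, LinearMap.id_coe, id_eq,
        assoc_tmul, LinearEquiv.coe_coe, comm_tmul, assoc_symm_tmul]
      induction cX x0 using TensorProduct.induction_on with
      | zero => simp
      | add u v hu hv => simp only [map_add, add_tmul, tmul_add, smul_add, hu, hv]
      | tmul x2 x00 =>
        simp only [assoc_symm_tmul]
        induction cY y0 using TensorProduct.induction_on with
        | zero => simp
        | add u v hu hv => simp only [map_add, add_tmul, tmul_add, smul_add, hu, hv]
        | tmul y2 y00 =>
          simp only [tensorTensorTensorComm_tmul, assoc_symm_tmul, withLegs_tmul,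
            yd1LeftCore_tmul, cweight, LinearMap.comp_apply, LinearEquiv.coe_coe]
          induction cM (act (B.mul x1 y1) m) using TensorProduct.induction_on with
          | zero => simp
          | add u v hu hv => simp only [map_add, add_tmul, smul_add, hu, hv]
          | tmul c v => simp [sigma3R, sigma3, smul_tmul']

lemma hexagon_left_tmul_eq_coact3 (x : X) (y : Y) (m : M) :
    assocInvMap B cM cX cY (ydBraiding act (coactTensor B cX cY)
        (assocInvMap B cX cY cM (x ⊗ₜ (y ⊗ₜ m)))) =
      withLegs X Y (yd1LeftCore B cM act) (coact3 cX x ⊗ₜ (coact3 cY y ⊗ₜ cM m)) := by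
  simp only [assocInvMap.eq_1 B cX cY cM, coact3, LinearMap.comp_apply, LinearEquiv.coe_coe,
    map_tmul, LinearMap.id_coe, id_eq]
  induction cX x using TensorProduct.induction_on with
  | zero => simp
  | add u v hu hv => simp only [map_add, add_tmul, hu, hv]
  | tmul x1 x0 =>
    induction cY y using TensorProduct.induction_on with
    | zero => simp
    | add u v hu hv => simp only [map_add, add_tmul, tmul_add, hu, hv]
    | tmul y1 y0 =>
      induction cM m using TensorProduct.induction_on with
      | zero => simp
      | add u v hu hv => simp only [map_add, tmul_add, hu, hv]
      | tmul m1 m0 =>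
        simp only [map_tmul, tensorTensorTensorComm_tmul, LinearMap.id_coe, id_eq,
          LinearEquiv.coe_coe, assoc_symm_tmul, lid_tmul, map_smul]
        rw [← sigma_smul_assocInvMap_ydBraiding_tmul]
        simp [sigma3R, sigma3]

-- On the left `cX x₀` only appears once `cM (act y₁ m)` is expanded, and vice versa on the
-- right, so `cX x₀` is expanded through a presentation instead of by induction.
lemma hexagon_right_tmul_eq_coact2 (x : X) (y : Y) (m : M) :
    TensorProduct.map (ydBraiding act cX) LinearMap.id (assocInvMap B cX cM cY
        (TensorProduct.map LinearMap.id (ydBraiding act cY) (x ⊗ₜ (y ⊗ₜ m)))) =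
      withLegs X Y (yd1RightCore B cM act) (coact2 cX x ⊗ₜ (coact2 cY y ⊗ₜ m)) := by
  simp only [ydBraiding, assocInvMap, coact2, map_tmul, LinearMap.id_coe, id_eq,
    LinearMap.comp_apply, LinearEquiv.coe_coe]
  induction cY y using TensorProduct.induction_on with
  | zero => simp
  | add u v hu hv => simp only [map_add, add_tmul, tmul_add, hu, hv]
  | tmul y1 y0 =>
    simp only [assoc_tmul, map_tmul, LinearMap.id_coe, id_eq, LinearEquiv.coe_coe, comm_tmul,
      assoc_symm_tmul, lift.tmul]
    induction cX x using TensorProduct.induction_on with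
    | zero => simp
    | add u v hu hv => simp only [map_add, add_tmul, hu, hv]
    | tmul x1 x0 =>
      simp only [map_tmul, LinearMap.id_coe, id_eq]
      induction cY y0 using TensorProduct.induction_on with
      | zero => simp
      | add u v hu hv => simp only [map_add, add_tmul, tmul_add, hu, hv]
      | tmul y2 y00 =>
        simp only [assoc_symm_tmul]
        obtain ⟨s, x2, x00, hx0⟩ := exists_sum_tmul (cX x0)
        rw [hx0]
        simp only [tmul_sum, map_sum, assoc_symm_tmul, sum_tmul, withLegs_tmul, yd1RightCore_tmul,
          cweight, LinearMap.comp_apply, LinearEquiv.coe_coe]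
        induction cM (act y1 m) using TensorProduct.induction_on with
        | zero => simp
        | add u v hu hv =>
          simp only [map_add, add_tmul, tmul_add, Finset.sum_add_distrib, hu, hv]
        | tmul c v =>
          simp [hx0, sum_tmul, Finset.smul_sum, sigma3R, sigma3, smul_tmul']

variable {cX cY}

theorem hexagon_left_tmul (hX : IsComodule B cX) (hY : IsComodule B cY) (x : X) (y : Y) (m : M) :
    assocInvMap B cM cX cY (ydBraiding act (coactTensor B cX cY)
        (assocInvMap B cX cY cM (x ⊗ₜ (y ⊗ₜ m)))) =
      withLegs X Y (yd1Left B cM act) (cX x ⊗ₜ (cY y ⊗ₜ m)) := by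
  rw [hexagon_left_tmul_eq_coact3, hX.coact3_eq, hY.coact3_eq, LinearMap.comp_apply,
    LinearMap.comp_apply]
  exact withLegs_map_tmul (yd1LeftCore B cM act) (comul3 B) (comul3 B) cM (cX x) (cY y) m

theorem hexagon_right_tmul (hX : IsComodule B cX) (hY : IsComodule B cY) (x : X) (y : Y)
    (m : M) :
    TensorProduct.map (ydBraiding act cX) LinearMap.id (assocInvMap B cX cM cY
        (TensorProduct.map LinearMap.id (ydBraiding act cY) (x ⊗ₜ (y ⊗ₜ m)))) =
      withLegs X Y (yd1Right B cM act) (cX x ⊗ₜ (cY y ⊗ₜ m)) := by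
  rw [hexagon_right_tmul_eq_coact2, hX.coact2_eq, hY.coact2_eq, LinearMap.comp_apply,
    LinearMap.comp_apply]
  exact withLegs_map_tmul (yd1RightCore B cM act) B.comul B.comul LinearMap.id (cX x) (cY y) m

theorem ydBraiding_hexagon (hyd1 : yd1Left B cM act = yd1Right B cM act)
    (hX : IsComodule B cX) (hY : IsComodule B cY) :
    assocInvMap B cM cX cY ∘ₗ ydBraiding act (coactTensor B cX cY) ∘ₗ assocInvMap B cX cY cM =
      TensorProduct.map (ydBraiding act cX) LinearMap.id ∘ₗ assocInvMap B cX cM cY ∘ₗ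
        TensorProduct.map LinearMap.id (ydBraiding act cY) :=
  TensorProduct.ext_threefold' fun x y m => by
    simp only [LinearMap.comp_apply, hexagon_left_tmul B cM act hX hY,
      hexagon_right_tmul B cM act hX hY, hyd1]

theorem yd1Left_eq_of_hexagon
    (hhex : assocInvMap B cM B.comul B.comul ∘ₗ ydBraiding act (coactTensor B B.comul B.comul) ∘ₗ
        assocInvMap B B.comul B.comul cM =
      TensorProduct.map (ydBraiding act B.comul) LinearMap.id ∘ₗ
        assocInvMap B B.comul cM B.comul ∘ₗ
          TensorProduct.map LinearMap.id (ydBraiding act B.comul)) :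
    yd1Left B cM act = yd1Right B cM act :=
  TensorProduct.ext_threefold' fun h g m => by
    have := congrArg (fun w => counitRight B M (counitRight B (M ⊗[k] H) w))
      (LinearMap.congr_fun hhex (h ⊗ₜ (g ⊗ₜ m)))
    simp only [LinearMap.comp_apply,
      hexagon_left_tmul B cM act (isComodule_comul B) (isComodule_comul B),
      hexagon_right_tmul B cM act (isComodule_comul B) (isComodule_comul B),
      counitRight_withLegs, counitRight_comul] at this
    exact this

end Hexagon

section Center

variable (cM : M →ₗ[k] H ⊗[k] M)

theorem isComodule_unitCoact : IsComodule B (TensorProduct.mk k H k B.one) :=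
  ⟨fun c => by simp [B.comul_one], fun c => by simp [B.counit_one]⟩

theorem ydBraiding_natural (act : H →ₗ[k] M →ₗ[k] M) {N' : Type} [AddCommGroup N'] [Module k N']
    {cN : N →ₗ[k] H ⊗[k] N} {cN' : N' →ₗ[k] H ⊗[k] N'} (φ : N →ₗ[k] N')
    (hφ : cN' ∘ₗ φ = TensorProduct.map LinearMap.id φ ∘ₗ cN) :
    ydBraiding act cN' ∘ₗ TensorProduct.map φ LinearMap.id =
      TensorProduct.map LinearMap.id φ ∘ₗ ydBraiding act cN :=
  TensorProduct.ext' fun n m => by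
    simp only [ydBraiding, LinearMap.comp_apply, map_tmul, LinearMap.id_coe, id_eq,
      ← LinearMap.comp_apply cN' φ, hφ]
    induction cN n using TensorProduct.induction_on with
    | zero => simp
    | add u v hu hv => simp only [map_add, add_tmul, hu, hv]
    | tmul a v => simp

def ydCenterObj (act : H →ₗ[k] M →ₗ[k] M) (hYD : IsYetterDrinfeld B cM act) :
    RightCenterObj B M cM where
  t _ _ _ cN _ := ydBraiding act cN
  natural _ _ _ _ _ _ _ _ _ _ φ hφ := ydBraiding_natural act φ hφ
  unit _ m := by simp [ydBraiding, hYD.one_act]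
  colinear _ _ _ _ hN :=
    ydBraiding_colinear B cM act ((isYetterDrinfeld_iff B cM act).1 hYD).2.2.2 hN
  hexagon _ _ _ _ _ _ _ _ hX hY _ :=
    ydBraiding_hexagon B cM act ((isYetterDrinfeld_iff B cM act).1 hYD).2.2.1 hX hY

variable {cM}

def centerAct (Z : RightCenterObj B M cM) : H →ₗ[k] M →ₗ[k] M :=
  TensorProduct.curry (counitRight B M ∘ₗ Z.t H B.comul (isComodule_comul B))

theorem RightCenterObj.t_eq_ydBraiding (Z : RightCenterObj B M cM) {cN : N →ₗ[k] H ⊗[k] N}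
    (hN : IsComodule B cN) : Z.t N cN hN = ydBraiding (centerAct B Z) cN := by
  have hnatCoact := Z.natural N (H ⊗[k] N) cN (cofreeCoact B N) hN (isComodule_cofreeCoact B) cN
    (LinearMap.ext hN.1)
  have hnatTmul (v : N) := Z.natural H (H ⊗[k] N) B.comul (cofreeCoact B N) (isComodule_comul B)
    (isComodule_cofreeCoact B) ((TensorProduct.mk k H N).flip v)
    (LinearMap.ext fun h => cofreeCoact_tmul B h v)
  refine TensorProduct.ext' fun n m => ?_
  have hcofree : Z.t N cN hN (n ⊗ₜ m) = TensorProduct.map LinearMap.id (counitLeft B N)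
      (Z.t (H ⊗[k] N) (cofreeCoact B N) (isComodule_cofreeCoact B) (cN n ⊗ₜ m)) := by
    have := LinearMap.congr_fun hnatCoact (n ⊗ₜ m)
    simp only [LinearMap.comp_apply, map_tmul, LinearMap.id_coe, id_eq] at this
    rw [this]
    induction Z.t N cN hN (n ⊗ₜ m) using TensorProduct.induction_on with
    | zero => simp
    | add u v hu hv => simp only [map_add, ← hu, ← hv]
    | tmul m' n' => simp [hN.counitLeft_coact]
  rw [hcofree]
  simp only [ydBraiding, LinearMap.comp_apply, map_tmul, LinearMap.id_coe, id_eq]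
  induction cN n using TensorProduct.induction_on with
  | zero => simp
  | add u v hu hv => simp only [map_add, add_tmul, hu, hv]
  | tmul a v =>
    have := LinearMap.congr_fun (hnatTmul v) (a ⊗ₜ m)
    simp only [LinearMap.comp_apply, map_tmul, LinearMap.flip_apply, mk_apply, LinearMap.id_coe,
      id_eq] at this
    simp only [this, centerAct, LinearEquiv.coe_coe, assoc_tmul, map_tmul, comm_tmul,
      assoc_symm_tmul, lift.tmul, curry_apply, LinearMap.comp_apply, LinearMap.id_coe, id_eq]
    induction Z.t H B.comul (isComodule_comul B) (a ⊗ₜ m) using TensorProduct.induction_on with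
    | zero => simp
    | add u w hu hw => simp only [map_add, add_tmul, hu, hw]
    | tmul m' h => simp [smul_tmul]

theorem centerAct_one (Z : RightCenterObj B M cM) (m : M) : centerAct B Z B.one m = m := by
  have hunit := Z.unit (isComodule_unitCoact B) m
  rw [Z.t_eq_ydBraiding] at hunit
  simpa [ydBraiding] using congrArg (TensorProduct.rid k M) hunit

theorem isYetterDrinfeld_centerAct (hcM : IsComodule B cM) (Z : RightCenterObj B M cM) :
    IsYetterDrinfeld B cM (centerAct B Z) := by
  have hcomul := isComodule_comul B
  have hhex := Z.hexagon H H B.comul B.comul hcomul hcomul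
    (isComodule_coactTensor B hcomul hcomul)
  have hcol := Z.colinear H B.comul hcomul
  simp only [Z.t_eq_ydBraiding] at hhex hcol
  exact (isYetterDrinfeld_iff B cM _).2 ⟨hcM, centerAct_one B Z,
    yd1Left_eq_of_hexagon B cM _ hhex, yd3Left_eq_of_colinear B cM _ hcol⟩

end Center

end DQH

open DQH in
/-- Proposition 2.7: for a dual quasi-bialgebra `H`, the category of left-left
Yetter-Drinfeld modules is isomorphic to the right weak center of the monoidal category of
left `H`-comodules.  At the level of structures on a fixed comodule `(M, cM)`: every right
weak center object gives a Yetter-Drinfeld action `h·m = (id⊗ε)c_{H,M}(h⊗m)` whose induced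
half-braiding is `c_{N,M}(n⊗m) = n₍₋₁₎·m ⊗ n₍₀₎`, and conversely every Yetter-Drinfeld
action arises this way. -/
theorem yd_iff_right_center {k H : Type} [Field k] [AddCommGroup H] [Module k H]
    (B : DualQuasiBialgebra k H)
    {M : Type} [AddCommGroup M] [Module k M]
    (cM : M →ₗ[k] H ⊗[k] M) (hcM : IsComodule B cM) :
    (∀ Z : RightCenterObj B M cM,
      ∃ act : H →ₗ[k] M →ₗ[k] M,
        (∀ h m, act h m =
          (TensorProduct.rid k M)
            ((TensorProduct.map LinearMap.id B.counit)
              (Z.t H B.comul ⟨B.coassoc, B.counit_left⟩ (h ⊗ₜ[k] m)))) ∧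
        IsYetterDrinfeld B cM act ∧
        (∀ (N : Type) [AddCommGroup N] [Module k N]
            (cN : N →ₗ[k] H ⊗[k] N) (hN : IsComodule B cN)
            (n : N) (m : M) (sn : Finset ℕ) (n1 : ℕ → H) (n0 : ℕ → N),
          cN n = ∑ i ∈ sn, n1 i ⊗ₜ[k] n0 i →
          Z.t N cN hN (n ⊗ₜ[k] m) = ∑ i ∈ sn, act (n1 i) m ⊗ₜ[k] n0 i)) ∧
    (∀ act : H →ₗ[k] M →ₗ[k] M, IsYetterDrinfeld B cM act →
      ∃ Z : RightCenterObj B M cM,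
        ∀ (N : Type) [AddCommGroup N] [Module k N]
            (cN : N →ₗ[k] H ⊗[k] N) (hN : IsComodule B cN)
            (n : N) (m : M) (sn : Finset ℕ) (n1 : ℕ → H) (n0 : ℕ → N),
          cN n = ∑ i ∈ sn, n1 i ⊗ₜ[k] n0 i →
          Z.t N cN hN (n ⊗ₜ[k] m) = ∑ i ∈ sn, act (n1 i) m ⊗ₜ[k] n0 i) := by
  refine ⟨fun Z => ⟨centerAct B Z, fun h m => rfl, isYetterDrinfeld_centerAct B hcM Z, ?_⟩,
    fun act hYD => ⟨ydCenterObj B cM act hYD, ?_⟩⟩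
  · intro N _ _ cN hN n m sn n1 n0 hn
    rw [Z.t_eq_ydBraiding B hN, ydBraiding_tmul_eq_sum _ cN n m sn n1 n0 hn]
  · intro N _ _ cN hN n m sn n1 n0 hn
    exact ydBraiding_tmul_eq_sum act cN n m sn n1 n0 hn
end
end
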